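/- arXiv:math/0503670 — 6 statements merged into one kernel-verified Lean document; each statement's English description precedes it below -/
import Mathlib

section
/- In Thompson's group T, for all integers n ≥ 0 and m with 1 ≤ m < n+2, one has c_n^m = x_{n-m+1} · c_{n+1}^m. (Note that n−m+1 ≥ 0 since m < n+2.) -/
/-- Relators of the standard infinite presentation of Thompson's group `T`,
on generators `Sum.inl i ↦ x_i` and `Sum.inr i ↦ c_i`. -/
def TRel : Set (FreeGroup (ℕ ⊕ ℕ)) :=
  { r | (∃ i j : ℕ, i < j ∧
        r = FreeGroup.of (Sum.inl j) * FreeGroup.of (Sum.inl i) *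
            (FreeGroup.of (Sum.inl i) * FreeGroup.of (Sum.inl (j + 1)))⁻¹) ∨
    (∃ k n : ℕ, k < n ∧
        r = FreeGroup.of (Sum.inl k) * FreeGroup.of (Sum.inr (n + 1)) *
            (FreeGroup.of (Sum.inr n) * FreeGroup.of (Sum.inl (k + 1)))⁻¹) ∨
    (∃ n : ℕ, r = FreeGroup.of (Sum.inr n) * FreeGroup.of (Sum.inl 0) *
            ((FreeGroup.of (Sum.inr (n + 1))) ^ 2)⁻¹) ∨
    (∃ n : ℕ, r = FreeGroup.of (Sum.inr n) *
            (FreeGroup.of (Sum.inl n) * FreeGroup.of (Sum.inr (n + 1)))⁻¹) ∨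
    (∃ n : ℕ, r = (FreeGroup.of (Sum.inr n)) ^ (n + 2)) }

/-- Thompson's group `T`. -/
abbrev ThompsonT : Type := PresentedGroup TRel

/-- The generator `x_i` of `T`. -/
def x (i : ℕ) : ThompsonT := PresentedGroup.of (Sum.inl i)

/-- The torsion generator `c_i` of `T`. -/
def c (i : ℕ) : ThompsonT := PresentedGroup.of (Sum.inr i)

lemma rel_one {r : FreeGroup (ℕ ⊕ ℕ)} (h : r ∈ TRel) :
    PresentedGroup.mk TRel r = 1 := by
  have : r ∈ Subgroup.normalClosure TRel := Subgroup.subset_normalClosure h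
  exact (QuotientGroup.eq_one_iff r).mpr this

/-- Relation (4): `c_n = x_n * c_{n+1}`. -/
lemma rel4 (n : ℕ) : c n = x n * c (n + 1) := by
  have h := rel_one (show (FreeGroup.of (Sum.inr n) *
      (FreeGroup.of (Sum.inl n) * FreeGroup.of (Sum.inr (n + 1)))⁻¹ : FreeGroup (ℕ ⊕ ℕ)) ∈ TRel by
    exact Or.inr (Or.inr (Or.inr (Or.inl ⟨n, rfl⟩))))
  simp only [map_mul, map_inv] at h
  have := mul_eq_one_iff_eq_inv.mp h
  simpa [x, c, PresentedGroup.of] using this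

/-- Relation (2): for `k < n`, `x_k * c_{n+1} = c_n * x_{k+1}`. -/
lemma rel2 {k n : ℕ} (hk : k < n) : x k * c (n + 1) = c n * x (k + 1) := by
  have h := rel_one (show (FreeGroup.of (Sum.inl k) * FreeGroup.of (Sum.inr (n + 1)) *
      (FreeGroup.of (Sum.inr n) * FreeGroup.of (Sum.inl (k + 1)))⁻¹ : FreeGroup (ℕ ⊕ ℕ)) ∈ TRel by
    exact Or.inr (Or.inl ⟨k, n, hk, rfl⟩))
  simp only [map_mul, map_inv] at h
  have := mul_eq_one_iff_eq_inv.mp h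
  simpa [x, c, PresentedGroup.of] using this

/-- Pumping lemma, first identity: for `1 ≤ m < n + 2`,
`c_n^m = x_{n-m+1} * c_{n+1}^m`.  (Since `m ≤ n + 1`, the index `n - m + 1`
is the exact natural number `n + 1 - m`.) -/
theorem pumping_first (n m : ℕ) (hm : 1 ≤ m) (hmn : m < n + 2) :
    c n ^ m = x (n + 1 - m) * c (n + 1) ^ m := by
  induction m with
  | zero => omega
  | succ m ih =>
    rcases Nat.eq_or_lt_of_le hm with h1 | h1
    · -- m + 1 = 1
      have : m = 0 := by omega
      subst this
      simpa using rel4 n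
    · have hm' : 1 ≤ m := by omega
      have hmn' : m < n + 2 := by omega
      have hmle : m ≤ n := by omega
      have ih' := ih hm' hmn'
      have hidx : n + 1 - m = (n - m) + 1 := by omega
      have hk : n - m < n := by omega
      calc c n ^ (m + 1) = c n * c n ^ m := by rw [pow_succ'] 
        _ = c n * (x ((n - m) + 1) * c (n + 1) ^ m) := by rw [ih', hidx]
        _ = (c n * x ((n - m) + 1)) * c (n + 1) ^ m := by rw [mul_assoc]
        _ = (x (n - m) * c (n + 1)) * c (n + 1) ^ m := by rw [rel2 hk]
        _ = x (n - m) * c (n + 1) ^ (m + 1) := by rw [mul_assoc, ← pow_succ']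
        _ = x (n + 1 - (m + 1)) * c (n + 1) ^ (m + 1) := by
            have : n - m = n + 1 - (m + 1) := by omega
            rw [this]
end

section
/- Every element g of Thompson's group T can be written as a pcq expression; that is, there exist n, m ≥ 0, indices 0 ≤ i_1 < ··· < i_n and 0 ≤ j_1 < ··· < j_m, exponents r_1,…,r_n > 0 and s_1,…,s_m > 0, and either integers i ≥ 0, j with 1 ≤ j < i+2 or no torsion factor, such that g = x_{i_1}^{r_1}···x_{i_n}^{r_n} · c_i^j · x_{j_m}^{-s_m}···x_{j_1}^{-s_1}. -/
/-- The product `x_{i_1}^{r_1} ⋯ x_{i_n}^{r_n}` in `T` encoded by a list of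
(index, exponent) pairs. -/
def posPart (l : List (ℕ × ℕ)) : ThompsonT := (l.map fun p => x p.1 ^ p.2).prod

/-- The indices of the list are strictly increasing. -/
def Increasing (l : List (ℕ × ℕ)) : Prop := l.Chain' fun a b => a.1 < b.1

/-- All exponents of the list are positive. -/
def PosExps (l : List (ℕ × ℕ)) : Prop := ∀ a ∈ l, 0 < a.2

/-!
Let `T⁺` be the submonoid generated by the `x_i`. The elements `p * c_n ^ e * q⁻¹` with
`p, q ∈ T⁺` form a set containing `1`, closed under inversion (as `c_n⁻¹ = c_n ^ (n + 1)`) and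
under left multiplication by the generators and their inverses; hence it is all of `T`.
Three rewriting rules drive this: `x_k⁻¹ * p` equals `p'` or `p' * x_{k'}⁻¹` with `p' ∈ T⁺`;
`c_n ^ e = c_{n+1} ^ e' * q⁻¹` with `q ∈ T⁺`, so any two torsion powers merge into one; and
`x_k⁻¹ * c_n ^ e = c_N ^ e' * q⁻¹`, whose inverse moves torsion powers rightwards through `T⁺`.
Finally relation (1) sorts every element of `T⁺` into the form `x_{i_1}^{r_1} ⋯ x_{i_n}^{r_n}`,
and the exponent of `c_n` is reduced modulo `n + 2`.
-/

namespace ThompsonT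

theorem x_mul_x {i j : ℕ} (h : i < j) : x j * x i = x i * x (j + 1) :=
  PresentedGroup.mk_eq_mk_of_mul_inv_mem (Or.inl ⟨i, j, h, rfl⟩)

theorem x_mul_c_succ {k n : ℕ} (h : k < n) : x k * c (n + 1) = c n * x (k + 1) :=
  PresentedGroup.mk_eq_mk_of_mul_inv_mem (Or.inr <| Or.inl ⟨k, n, h, rfl⟩)

theorem c_mul_x_zero (n : ℕ) : c n * x 0 = c (n + 1) ^ 2 :=
  PresentedGroup.mk_eq_mk_of_mul_inv_mem (Or.inr <| Or.inr <| Or.inl ⟨n, rfl⟩)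

theorem c_eq_x_mul_c_succ (n : ℕ) : c n = x n * c (n + 1) :=
  PresentedGroup.mk_eq_mk_of_mul_inv_mem (Or.inr <| Or.inr <| Or.inr <| Or.inl ⟨n, rfl⟩)

theorem c_pow_add_two (n : ℕ) : c n ^ (n + 2) = 1 :=
  PresentedGroup.one_of_mem (Or.inr <| Or.inr <| Or.inr <| Or.inr ⟨n, rfl⟩)

theorem c_pow_mod (n e : ℕ) : c n ^ (e % (n + 2)) = c n ^ e :=
  (pow_eq_pow_mod e (c_pow_add_two n)).symm

theorem c_pow_inv (n e : ℕ) : (c n ^ e)⁻¹ = c n ^ ((n + 1) * e) := by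
  rw [inv_eq_iff_mul_eq_one, ← pow_add, show e + (n + 1) * e = (n + 2) * e by ring, pow_mul,
    c_pow_add_two, one_pow]

theorem c_pow_eq_inv (n e : ℕ) : c n ^ e = (c n ^ ((n + 1) * e))⁻¹ :=
  inv_eq_iff_eq_inv.1 (c_pow_inv n e)

theorem x_mul_x_pow {i k : ℕ} (h : i < k) (r : ℕ) : x k * x i ^ r = x i ^ r * x (k + r) := by
  induction r with
  | zero => simp
  | succ r ih =>
    rw [pow_succ, ← mul_assoc, ih, mul_assoc, x_mul_x (by omega), ← mul_assoc, ← pow_succ,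
      add_assoc]

theorem x_inv_mul_c {k n : ℕ} (h : k < n) : (x k)⁻¹ * c n = c (n + 1) * (x (k + 1))⁻¹ := by
  rw [inv_mul_eq_iff_eq_mul, ← mul_assoc, eq_mul_inv_iff_mul_eq, x_mul_c_succ h]

theorem x_inv_mul_c_self (n : ℕ) : (x n)⁻¹ * c n = c (n + 1) := by
  rw [c_eq_x_mul_c_succ n, inv_mul_cancel_left]

theorem x_inv_mul_c_pow {k a n : ℕ} (h : k + a ≤ n) :
    (x k)⁻¹ * c n ^ a = c (n + 1) ^ a * (x (k + a))⁻¹ := by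
  induction a generalizing k with
  | zero => simp
  | succ a ih =>
    rw [pow_succ', ← mul_assoc, x_inv_mul_c (by omega), mul_assoc, ih (by omega), ← mul_assoc,
      ← pow_succ', Nat.add_right_comm, add_assoc]

theorem x_inv_mul_c_add_pow (k n : ℕ) :
    (x k)⁻¹ * c (k + n) ^ (n + 1) = c (k + n + 1) ^ (n + 1) := by
  rw [pow_succ, ← mul_assoc, x_inv_mul_c_pow le_rfl, mul_assoc, x_inv_mul_c_self, ← pow_succ]

theorem c_pow_succ_eq_mul_x_inv {d n : ℕ} (h : d ≤ n) :
    c n ^ (d + 1) = c (n + 1) ^ (d + 2) * (x d)⁻¹ := by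
  have hc : c n = c (n + 1) ^ 2 * (x 0)⁻¹ := by rw [← c_mul_x_zero, mul_inv_cancel_right]
  rw [pow_succ']
  nth_rw 1 [hc]
  rw [mul_assoc, x_inv_mul_c_pow (by omega), zero_add, ← mul_assoc, ← pow_add,
    add_comm 2]

end ThompsonT

def insertX : ℕ → List (ℕ × ℕ) → List (ℕ × ℕ)
  | k, [] => [(k, 1)]
  | k, (i, r) :: l =>
    if k < i then (k, 1) :: (i, r) :: l
    else if k = i then (i, r + 1) :: l
    else (i, r) :: insertX (k + r) l

theorem posPart_nil : posPart [] = 1 := rfl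

theorem posPart_cons (p : ℕ × ℕ) (l : List (ℕ × ℕ)) :
    posPart (p :: l) = x p.1 ^ p.2 * posPart l := by
  simp [_root_.posPart]

theorem posPart_insertX (k : ℕ) (l : List (ℕ × ℕ)) :
    posPart (insertX k l) = x k * posPart l := by
  induction l generalizing k with
  | nil => simp [insertX, posPart_cons, posPart_nil]
  | cons p l ih =>
    obtain ⟨i, r⟩ := p
    simp only [insertX]
    split_ifs with _ h₂
    · simp [posPart_cons]
    · simp [posPart_cons, h₂, pow_succ', mul_assoc]
    · simp only [posPart_cons, ih, ← mul_assoc, ThompsonT.x_mul_x_pow (by omega : i < k)]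

theorem Increasing.cons_of_fst_eq {p p' : ℕ × ℕ} {l : List (ℕ × ℕ)}
    (hl : Increasing (p :: l)) (h : p.1 = p'.1) : Increasing (p' :: l) :=
  List.IsChain.imp_head (fun hz => h ▸ hz) hl

theorem Increasing.cons_insertX {b : ℕ × ℕ} {k : ℕ} :
    ∀ {l : List (ℕ × ℕ)}, b.1 < k → Increasing (b :: l) → Increasing (b :: insertX k l)
  | [], hb, _ => List.isChain_pair.2 hb
  | (i, r) :: l, hb, hl => by
    rw [Increasing, List.Chain', List.isChain_cons_cons] at hl
    simp only [insertX]
    split_ifs with h₁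
    · exact List.isChain_cons_cons.2 ⟨hb, List.isChain_cons_cons.2 ⟨h₁, hl.2⟩⟩
    · exact List.isChain_cons_cons.2 ⟨hl.1, Increasing.cons_of_fst_eq hl.2 rfl⟩
    · exact List.isChain_cons_cons.2 ⟨hl.1, Increasing.cons_insertX (by omega) hl.2⟩

theorem Increasing.insertX (k : ℕ) :
    ∀ {l : List (ℕ × ℕ)}, Increasing l → Increasing (insertX k l)
  | [], _ => List.isChain_singleton _
  | (i, r) :: l, hl => by
    simp only [_root_.insertX]
    split_ifs with h₁
    · exact List.isChain_cons_cons.2 ⟨h₁, hl⟩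
    · exact hl.cons_of_fst_eq rfl
    · exact hl.cons_insertX (by omega)

theorem posExps_cons {p : ℕ × ℕ} {l : List (ℕ × ℕ)} :
    PosExps (p :: l) ↔ 0 < p.2 ∧ PosExps l :=
  List.forall_mem_cons

theorem PosExps.insertX (k : ℕ) {l : List (ℕ × ℕ)} (hl : PosExps l) : PosExps (insertX k l) := by
  induction l generalizing k with
  | nil => simp [PosExps, _root_.insertX]
  | cons p l ih =>
    obtain ⟨i, r⟩ := p
    obtain ⟨hr, hl⟩ := posExps_cons.1 hl
    simp only [_root_.insertX]
    split_ifs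
    · exact posExps_cons.2 ⟨Nat.one_pos, posExps_cons.2 ⟨hr, hl⟩⟩
    · exact posExps_cons.2 ⟨Nat.succ_pos r, hl⟩
    · exact posExps_cons.2 ⟨hr, ih (k + r) hl⟩

namespace ThompsonT

def posMonoid : Submonoid ThompsonT := Submonoid.closure (Set.range x)

theorem x_mem_posMonoid (i : ℕ) : x i ∈ posMonoid := Submonoid.subset_closure ⟨i, rfl⟩

theorem exists_posPart_eq {p : ThompsonT} (hp : p ∈ posMonoid) :
    ∃ l, Increasing l ∧ PosExps l ∧ posPart l = p := by
  induction hp using Submonoid.closure_induction_left with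
  | one => exact ⟨[], List.isChain_nil, List.forall_mem_nil _, posPart_nil⟩
  | mul_left _ hk _ _ ih =>
    obtain ⟨k, rfl⟩ := hk
    obtain ⟨l, hl, hl', rfl⟩ := ih
    exact ⟨insertX k l, hl.insertX k, hl'.insertX k, posPart_insertX k l⟩

theorem x_inv_mul_mem_or {p : ThompsonT} (hp : p ∈ posMonoid) (k : ℕ) :
    (x k)⁻¹ * p ∈ posMonoid ∨ ∃ k', ∃ p' ∈ posMonoid, (x k)⁻¹ * p = p' * (x k')⁻¹ := by
  induction hp using Submonoid.closure_induction generalizing k with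
  | mem _ ha =>
    obtain ⟨a, rfl⟩ := ha
    rcases lt_trichotomy k a with h | rfl | h
    · refine Or.inr ⟨k, x (a + 1), x_mem_posMonoid _, ?_⟩
      rw [inv_mul_eq_iff_eq_mul, ← mul_assoc, eq_mul_inv_iff_mul_eq, x_mul_x h]
    · exact Or.inl (by rw [inv_mul_cancel]; exact one_mem _)
    · refine Or.inr ⟨k + 1, x a, x_mem_posMonoid _, ?_⟩
      rw [inv_mul_eq_iff_eq_mul, ← mul_assoc, eq_mul_inv_iff_mul_eq, x_mul_x h]
  | one => exact Or.inr ⟨k, 1, one_mem _, by simp⟩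
  | mul p₁ p₂ _ hp₂ ih₁ ih₂ =>
    rcases ih₁ k with h₁ | ⟨k₁, p₁', hp₁', h₁⟩
    · exact Or.inl (by simpa only [mul_assoc] using mul_mem h₁ hp₂)
    rcases ih₂ k₁ with h₂ | ⟨k₂, p₂', hp₂', h₂⟩
    · exact Or.inl (by rw [← mul_assoc, h₁, mul_assoc]; exact mul_mem hp₁' h₂)
    · exact Or.inr ⟨k₂, p₁' * p₂', mul_mem hp₁' hp₂', by
        rw [← mul_assoc, h₁, mul_assoc, h₂, mul_assoc]⟩

theorem exists_c_pow_eq_c_succ_pow_mul_inv (n e : ℕ) :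
    ∃ e', ∃ q ∈ posMonoid, c n ^ e = c (n + 1) ^ e' * q⁻¹ := by
  rw [← c_pow_mod]
  rcases h : e % (n + 2) with _ | d
  · exact ⟨0, 1, one_mem _, by simp⟩
  · have := Nat.mod_lt e (by omega : 0 < n + 2)
    exact ⟨d + 2, x d, x_mem_posMonoid d, c_pow_succ_eq_mul_x_inv (by omega)⟩

theorem exists_c_pow_eq_c_pow_mul_inv {n m : ℕ} (h : n ≤ m) (e : ℕ) :
    ∃ e', ∃ q ∈ posMonoid, c n ^ e = c m ^ e' * q⁻¹ := by
  induction m, h using Nat.le_induction with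
  | base => exact ⟨e, 1, one_mem _, by simp⟩
  | succ m _ ih =>
    obtain ⟨e₁, q₁, hq₁, h₁⟩ := ih
    obtain ⟨e₂, q₂, hq₂, h₂⟩ := exists_c_pow_eq_c_succ_pow_mul_inv m e₁
    exact ⟨e₂, q₁ * q₂, mul_mem hq₁ hq₂, by rw [h₁, h₂, mul_inv_rev, mul_assoc]⟩

theorem exists_x_inv_mul_c_pow (k n e : ℕ) :
    ∃ N e', ∃ q ∈ posMonoid, (x k)⁻¹ * c n ^ e = c N ^ e' * q⁻¹ := by
  -- Raise `c_n` to `c_{k+n}`, then split off the factor `c_{k+n}^{n+1}`, which absorbs `x_k⁻¹`.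
  obtain ⟨e₁, q₁, hq₁, h₁⟩ := exists_c_pow_eq_c_pow_mul_inv (Nat.le_add_left n k) e
  obtain ⟨e₂, q₂, hq₂, h₂⟩ := exists_c_pow_eq_c_succ_pow_mul_inv (k + n) (e₁ + k + 1)
  have hsplit : c (k + n) ^ e₁ = c (k + n) ^ (n + 1) * c (k + n) ^ (e₁ + k + 1) := by
    rw [← pow_add, show n + 1 + (e₁ + k + 1) = e₁ + (k + n + 2) by omega, pow_add,
      c_pow_add_two, mul_one]
  refine ⟨k + n + 1, n + 1 + e₂, q₁ * q₂, mul_mem hq₁ hq₂, ?_⟩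
  rw [h₁, hsplit, ← mul_assoc, ← mul_assoc, x_inv_mul_c_add_pow, h₂, mul_inv_rev,
    pow_add _ (n + 1)]
  simp only [mul_assoc]

theorem exists_c_pow_mul_x (n e i : ℕ) :
    ∃ N e', ∃ p ∈ posMonoid, c n ^ e * x i = p * c N ^ e' := by
  obtain ⟨N, e', q, hq, h⟩ := exists_x_inv_mul_c_pow i n ((n + 1) * e)
  refine ⟨N, (N + 1) * e', q, hq, ?_⟩
  calc c n ^ e * x i = ((x i)⁻¹ * c n ^ ((n + 1) * e))⁻¹ := by
        rw [← c_pow_inv, mul_inv_rev, inv_inv, inv_inv]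
    _ = q * c N ^ ((N + 1) * e') := by rw [h, mul_inv_rev, inv_inv, c_pow_inv]

theorem exists_c_pow_mul_of_mem {p : ThompsonT} (hp : p ∈ posMonoid) (n e : ℕ) :
    ∃ N e', ∃ p' ∈ posMonoid, c n ^ e * p = p' * c N ^ e' := by
  induction hp using Submonoid.closure_induction generalizing n e with
  | mem _ hi =>
    obtain ⟨i, rfl⟩ := hi
    exact exists_c_pow_mul_x n e i
  | one => exact ⟨n, e, 1, one_mem _, by simp⟩
  | mul p₁ p₂ _ _ ih₁ ih₂ =>
    obtain ⟨N₁, e₁, p₁', hp₁', h₁⟩ := ih₁ n e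
    obtain ⟨N₂, e₂, p₂', hp₂', h₂⟩ := ih₂ N₁ e₁
    exact ⟨N₂, e₂, p₁' * p₂', mul_mem hp₁' hp₂', by
      rw [← mul_assoc, h₁, mul_assoc, h₂, mul_assoc]⟩

def IsPCQ (g : ThompsonT) : Prop :=
  ∃ p ∈ posMonoid, ∃ q ∈ posMonoid, ∃ n e : ℕ, g = p * c n ^ e * q⁻¹

theorem isPCQ_one : IsPCQ 1 := ⟨1, one_mem _, 1, one_mem _, 0, 0, by simp⟩

theorem isPCQ_c_pow_mul_inv (n e : ℕ) {q : ThompsonT} (hq : q ∈ posMonoid) :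
    IsPCQ (c n ^ e * q⁻¹) :=
  ⟨1, one_mem _, q, hq, n, e, by rw [one_mul]⟩

theorem IsPCQ.mul_left {g p : ThompsonT} (hp : p ∈ posMonoid) (hg : IsPCQ g) : IsPCQ (p * g) := by
  obtain ⟨p', hp', q, hq, n, e, rfl⟩ := hg
  exact ⟨p * p', mul_mem hp hp', q, hq, n, e, by simp only [mul_assoc]⟩

theorem IsPCQ.mul_inv {g q : ThompsonT} (hq : q ∈ posMonoid) (hg : IsPCQ g) : IsPCQ (g * q⁻¹) := by
  obtain ⟨p, hp, q', hq', n, e, rfl⟩ := hg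
  exact ⟨p, hp, q * q', mul_mem hq hq', n, e, by simp only [mul_inv_rev, mul_assoc]⟩

theorem IsPCQ.inv {g : ThompsonT} (hg : IsPCQ g) : IsPCQ g⁻¹ := by
  obtain ⟨p, hp, q, hq, n, e, rfl⟩ := hg
  exact ⟨q, hq, p, hp, n, (n + 1) * e, by simp only [mul_inv_rev, inv_inv, c_pow_inv, mul_assoc]⟩

theorem isPCQ_c_pow_mul_c_pow (a u b v : ℕ) : IsPCQ (c a ^ u * c b ^ v) := by
  wlog h : b ≤ a generalizing a b u v
  · rw [c_pow_eq_inv a u, c_pow_eq_inv b v, ← mul_inv_rev]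
    exact (this b ((b + 1) * v) a ((a + 1) * u) (by omega)).inv
  obtain ⟨v', q, hq, hv⟩ := exists_c_pow_eq_c_pow_mul_inv h v
  rw [hv, ← mul_assoc, ← pow_add]
  exact isPCQ_c_pow_mul_inv a (u + v') hq

theorem IsPCQ.x_inv_mul {g : ThompsonT} (k : ℕ) (hg : IsPCQ g) : IsPCQ ((x k)⁻¹ * g) := by
  obtain ⟨p, hp, q, hq, n, e, rfl⟩ := hg
  rcases x_inv_mul_mem_or hp k with h | ⟨k', p', hp', h⟩
  · simpa only [mul_assoc] using (isPCQ_c_pow_mul_inv n e hq).mul_left h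
  obtain ⟨N, e', q', hq', h'⟩ := exists_x_inv_mul_c_pow k' n e
  have : (x k)⁻¹ * (p * c n ^ e * q⁻¹) = p' * (c N ^ e' * q'⁻¹) * q⁻¹ := by
    rw [← h', ← mul_assoc, ← mul_assoc, ← mul_assoc, h, mul_assoc p']
  rw [this]
  exact ((isPCQ_c_pow_mul_inv N e' hq').mul_left hp').mul_inv hq

theorem IsPCQ.c_mul {g : ThompsonT} (k : ℕ) (hg : IsPCQ g) : IsPCQ (c k * g) := by
  obtain ⟨p, hp, q, hq, n, e, rfl⟩ := hg
  obtain ⟨N, e', p', hp', h⟩ := exists_c_pow_mul_of_mem hp k 1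
  have : c k * (p * c n ^ e * q⁻¹) = p' * (c N ^ e' * c n ^ e) * q⁻¹ := by
    rw [← pow_one (c k), ← mul_assoc, ← mul_assoc, h, mul_assoc p']
  rw [this]
  exact ((isPCQ_c_pow_mul_c_pow N e' n e).mul_left hp').mul_inv hq

theorem IsPCQ.c_pow_mul {g : ThompsonT} (k m : ℕ) (hg : IsPCQ g) : IsPCQ (c k ^ m * g) := by
  induction m with
  | zero => simpa using hg
  | succ m ih =>
    rw [pow_succ', mul_assoc]
    exact ih.c_mul k

theorem isPCQ (g : ThompsonT) : IsPCQ g := by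
  have hg : g ∈ Subgroup.closure (Set.range PresentedGroup.of) := by
    rw [PresentedGroup.closure_range_of]; trivial
  induction hg using Subgroup.closure_induction_left with
  | one => exact isPCQ_one
  | mul_left _ hs _ _ ih =>
    obtain ⟨i | i, rfl⟩ := hs
    exacts [ih.mul_left (x_mem_posMonoid i), ih.c_mul i]
  | inv_mul_cancel _ hs _ _ ih =>
    obtain ⟨i | i, rfl⟩ := hs
    · exact ih.x_inv_mul i
    · change IsPCQ ((c i)⁻¹ * _)
      rw [show (c i)⁻¹ = c i ^ (i + 1) by simpa using c_pow_inv i 1]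
      exact ih.c_pow_mul i (i + 1)

end ThompsonT

/-- Every element of Thompson's group `T` admits a `pcq` expression
`x_{i_1}^{r_1} ⋯ x_{i_n}^{r_n} · c_i^j · x_{j_m}^{-s_m} ⋯ x_{j_1}^{-s_1}`
with `0 ≤ i_1 < ⋯ < i_n`, `0 ≤ j_1 < ⋯ < j_m`, all `r_k, s_l > 0`, and either
`1 ≤ j < i + 2` or no torsion factor (`j = 0`). -/
theorem pcq_form_exists (g : ThompsonT) :
    ∃ (lp lq : List (ℕ × ℕ)) (i j : ℕ),
      Increasing lp ∧ Increasing lq ∧ PosExps lp ∧ PosExps lq ∧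
      (j = 0 ∨ (1 ≤ j ∧ j < i + 2)) ∧
      g = posPart lp * c i ^ j * (posPart lq)⁻¹ := by
  obtain ⟨p, hp, q, hq, n, e, rfl⟩ := ThompsonT.isPCQ g
  obtain ⟨lp, hlp, hlp', rfl⟩ := ThompsonT.exists_posPart_eq hp
  obtain ⟨lq, hlq, hlq', rfl⟩ := ThompsonT.exists_posPart_eq hq
  refine ⟨lp, lq, n, e % (n + 2), hlp, hlq, hlp', hlq', ?_, by rw [ThompsonT.c_pow_mod]⟩
  have := Nat.mod_lt e (by omega : 0 < n + 2)
  omega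
end

section
/- In Thompson's group T, for all integers i ≥ 1, j ≥ 1 and k with j ≤ k < i, one has x_{k-j} · c_i^j · x_k^{-1} = c_{i-1}^j. -/
/-- Reduction of type (1): for `1 ≤ j ≤ k < i`,
`x_{k-j} * c_i^j * x_k⁻¹ = c_{i-1}^j`. -/
theorem reduction_one (i j k : ℕ) (hi : 1 ≤ i) (hj : 1 ≤ j) (hjk : j ≤ k) (hki : k < i) :
    x (k - j) * c i ^ j * (x k)⁻¹ = c (i - 1) ^ j := by
  have rel2 : ∀ m n : ℕ, m < n → x m * c (n + 1) * (x (m + 1))⁻¹ = c n := by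
    intro m n h
    have hr : (FreeGroup.of (Sum.inl m) * FreeGroup.of (Sum.inr (n + 1)) *
        (FreeGroup.of (Sum.inr n) * FreeGroup.of (Sum.inl (m + 1)))⁻¹ : FreeGroup (ℕ ⊕ ℕ)) ∈
        TRel := Or.inr (Or.inl ⟨m, n, h, rfl⟩)
    have h1 : (QuotientGroup.mk (FreeGroup.of (Sum.inl m) * FreeGroup.of (Sum.inr (n + 1)) *
        (FreeGroup.of (Sum.inr n) * FreeGroup.of (Sum.inl (m + 1)))⁻¹) : ThompsonT) = 1 :=
      (QuotientGroup.eq_one_iff _).mpr (Subgroup.subset_normalClosure hr)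
    have h2 : x m * c (n + 1) * (c n * x (m + 1))⁻¹ = 1 := h1
    have h3 : x m * c (n + 1) = c n * x (m + 1) := by
      rwa [mul_inv_eq_one] at h2
    rw [h3]
    group
  have key : ∀ m : ℕ, m + 1 ≤ k → x (k - (m + 1)) * c i * (x (k - m))⁻¹ = c (i - 1) := by
    intro m hm
    have h1 : k - (m + 1) < i - 1 := by omega
    have h2 : k - (m + 1) + 1 = k - m := by omega
    have h3 : i - 1 + 1 = i := by omega
    have := rel2 (k - (m + 1)) (i - 1) h1
    rw [h2, h3] at this
    exact this
  clear hj
  induction j with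
  | zero => simp
  | succ j ih =>
    have ihj := ih (by omega)
    have hk := key j (by omega)
    calc x (k - (j + 1)) * c i ^ (j + 1) * (x k)⁻¹
        = (x (k - (j + 1)) * c i * (x (k - j))⁻¹) * (x (k - j) * c i ^ j * (x k)⁻¹) := by
          rw [pow_succ']; group
      _ = c (i - 1) * c (i - 1) ^ j := by rw [hk, ihj]
      _ = c (i - 1) ^ (j + 1) := by rw [pow_succ']
end

section
/- In Thompson's group T, for every integer n ≥ 0, the element c_n has order exactly n+2. -/
namespace TAux


abbrev X := ℕ → Bool

/-- prepend a bit -/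
def cns (b : Bool) (s : X) : X := fun i => Nat.casesOn i b s

/-- tail -/
def tl (s : X) : X := fun i => s (i + 1)

@[simp] lemma cns_zero (b : Bool) (s : X) : cns b s 0 = b := rfl
@[simp] lemma cns_succ (b : Bool) (s : X) (i : ℕ) : cns b s (i + 1) = s i := rfl
@[simp] lemma tl_cns (b : Bool) (s : X) : tl (cns b s) = s := rfl

lemma eta (s : X) : cns (s 0) (tl s) = s := by
  funext i; cases i <;> rfl

lemma eta1 (s : X) : ∃ b u, s = cns b u := ⟨s 0, tl s, (eta s).symm⟩

lemma eta2 (s : X) : ∃ b b' u, s = cns b (cns b' u) := by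
  obtain ⟨b, u, rfl⟩ := eta1 s
  obtain ⟨b', v, rfl⟩ := eta1 u
  exact ⟨b, b', v, rfl⟩

/-- a chain of `j` ones -/
def O : ℕ → X → X
  | 0, w => w
  | j + 1, w => cns true (O j w)

@[simp] lemma O_zero (w : X) : O 0 w = w := rfl
lemma O_succ (j : ℕ) (w : X) : O (j + 1) w = cns true (O j w) := rfl
@[simp] lemma O_succ_zero (j : ℕ) (w : X) : O (j + 1) w 0 = true := rfl
@[simp] lemma tl_O_succ (j : ℕ) (w : X) : tl (O (j + 1) w) = O j w := rfl
@[simp] lemma O_succ_one (j : ℕ) (w : X) : O (j + 2) w 1 = true := rfl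

lemma O_snoc (j : ℕ) (w : X) : O j (cns true w) = O (j + 1) w := by
  induction j with
  | zero => rfl
  | succ j ih => rw [O_succ, ih]; rfl

lemma O_add (a b : ℕ) (w : X) : O a (O b w) = O (a + b) w := by
  induction a with
  | zero => simp
  | succ a ih => rw [O_succ, ih, Nat.succ_add, ← O_succ]


/-! ### The generator maps on Cantor space -/

/-- the map `x₀`: `0w ↦ 00w`, `10w ↦ 01w`, `11w ↦ 1w` -/
def x0f (s : X) : X :=
  cond (s 0) (cond (s 1) (tl s) (cns false (cns true (tl (tl s))))) (cns false s)

/-- the inverse of `x₀`: `00w ↦ 0w`, `01w ↦ 10w`, `1w ↦ 11w` -/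
def x0i (s : X) : X :=
  cond (s 0) (cns true (cns true (tl s)))
    (cond (s 1) (cns true (cns false (tl (tl s)))) (tl s))

@[simp] lemma x0f_Z (w : X) : x0f (cns false w) = cns false (cns false w) := by
  simp [x0f]
@[simp] lemma x0f_OZ (w : X) : x0f (cns true (cns false w)) = cns false (cns true w) := by
  simp [x0f]
@[simp] lemma x0f_OO (w : X) : x0f (cns true (cns true w)) = cns true w := by
  simp [x0f]

lemma x0_li (s : X) : x0i (x0f s) = s := by
  obtain ⟨b, b', u, rfl⟩ := eta2 s
  cases b <;> cases b' <;> simp [x0f, x0i]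

lemma x0_ri (s : X) : x0f (x0i s) = s := by
  obtain ⟨b, b', u, rfl⟩ := eta2 s
  cases b <;> cases b' <;> simp [x0f, x0i]

/-- the map `xᵢ` -/
def xf : ℕ → X → X
  | 0, s => x0f s
  | i + 1, s => cond (s 0) (cns true (xf i (tl s))) s

/-- the inverse of `xᵢ` -/
def xif : ℕ → X → X
  | 0, s => x0i s
  | i + 1, s => cond (s 0) (cns true (xif i (tl s))) s

@[simp] lemma xf_zero (s : X) : xf 0 s = x0f s := rfl
@[simp] lemma xf_succ_Z (i : ℕ) (w : X) : xf (i + 1) (cns false w) = cns false w := by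
  simp [xf]
@[simp] lemma xf_succ_O (i : ℕ) (v : X) : xf (i + 1) (cns true v) = cns true (xf i v) := by
  simp [xf]
@[simp] lemma xif_zero (s : X) : xif 0 s = x0i s := rfl
@[simp] lemma xif_succ_Z (i : ℕ) (w : X) : xif (i + 1) (cns false w) = cns false w := by
  simp [xif]
@[simp] lemma xif_succ_O (i : ℕ) (v : X) : xif (i + 1) (cns true v) = cns true (xif i v) := by
  simp [xif]

lemma xf_li (i : ℕ) (s : X) : xif i (xf i s) = s := by
  induction i generalizing s with
  | zero => exact x0_li s
  | succ i ih =>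
    obtain ⟨b, u, rfl⟩ := eta1 s
    cases b <;> simp [ih]

lemma xf_ri (i : ℕ) (s : X) : xf i (xif i s) = s := by
  induction i generalizing s with
  | zero => exact x0_ri s
  | succ i ih =>
    obtain ⟨b, u, rfl⟩ := eta1 s
    cases b <;> simp [ih]

/-- `xᵢ` fixes everything outside the cylinder `1^i` -/
lemma xfA (i j : ℕ) (h : j < i) (w : X) : xf i (O j (cns false w)) = O j (cns false w) := by
  induction i generalizing j with
  | zero => omega
  | succ i ih =>
    cases j with
    | zero => simpa using xf_succ_Z i (cns false w)
    | succ j => rw [O_succ, xf_succ_O, ih j (by omega), ← O_succ]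

/-- on the cylinder `1^i`, `xᵢ` acts as `x₀` -/
lemma xfB (i : ℕ) (v : X) : xf i (O i v) = O i (x0f v) := by
  induction i with
  | zero => rfl
  | succ i ih => rw [O_succ, xf_succ_O, ih, ← O_succ]

lemma xf_big (i j : ℕ) (w : X) : xf i (O (i + j + 2) w) = O (i + j + 1) w := by
  have h1 : O (i + j + 2) w = O i (O (j + 2) w) := by rw [O_add]; ring_nf
  have h2 : O (i + j + 1) w = O i (O (j + 1) w) := by rw [O_add]; ring_nf
  rw [h1, h2, xfB]
  exact congrArg (O i) (x0f_OO (O j w))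


/-! ### The torsion maps `cₙ` -/

/-- the map `cₙ`: `0w ↦ 1^{n+1}w`, `1^{j+1}0w ↦ 1^j0w` (for `j < n`), `1^{n+1}w ↦ 1^n0w` -/
def cf : ℕ → X → X
  | 0, s => cns (!(s 0)) (tl s)
  | n + 1, s =>
    cond (s 0) (cond (s 1) (cns true (cf n (tl s))) (tl s)) (cns true (cf n s))

@[simp] lemma cf_succ_Z (n : ℕ) (w : X) :
    cf (n + 1) (cns false w) = cns true (cf n (cns false w)) := by simp [cf]
@[simp] lemma cf_succ_OZ (n : ℕ) (w : X) :
    cf (n + 1) (cns true (cns false w)) = cns false w := by simp [cf]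
@[simp] lemma cf_succ_OO (n : ℕ) (w : X) :
    cf (n + 1) (cns true (cns true w)) = cns true (cf n (cns true w)) := by simp [cf]

lemma cfA (n : ℕ) (w : X) : cf n (cns false w) = O (n + 1) w := by
  induction n with
  | zero => simp [cf, O_succ]
  | succ n ih => rw [cf_succ_Z, ih, ← O_succ]

lemma cfB (n j : ℕ) (h : j < n) (w : X) :
    cf n (O (j + 1) (cns false w)) = O j (cns false w) := by
  induction n generalizing j with
  | zero => omega
  | succ n ih =>
    cases j with
    | zero => simpa [O_succ] using cf_succ_OZ n (cns false w)
    | succ j =>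
      have e1 : O (j + 2) (cns false w) = cns true (cns true (O j (cns false w))) := rfl
      have e2 : cns true (O j (cns false w)) = O (j + 1) (cns false w) := rfl
      rw [e1, cf_succ_OO, e2, ih j (by omega), ← O_succ]

lemma cfC (n : ℕ) (w : X) : cf n (O (n + 1) w) = O n (cns false w) := by
  induction n with
  | zero => simp [cf, O_succ]
  | succ n ih =>
    rw [O_succ, O_succ, cf_succ_OO, ← O_succ, ih, ← O_succ]

/-- decomposition of a sequence by its leading run of ones -/
lemma dec (m : ℕ) (s : X) :
    (∃ j, j ≤ m ∧ ∃ w, s = O j (cns false w)) ∨ ∃ w, s = O (m + 1) w := by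
  induction m with
  | zero =>
    obtain ⟨b, u, rfl⟩ := eta1 s
    cases b
    · exact Or.inl ⟨0, le_refl _, u, rfl⟩
    · exact Or.inr ⟨u, rfl⟩
  | succ m ih =>
    rcases ih with ⟨j, hj, w, rfl⟩ | ⟨w, rfl⟩
    · exact Or.inl ⟨j, by omega, w, rfl⟩
    · obtain ⟨b, u, rfl⟩ := eta1 w
      cases b
      · exact Or.inl ⟨m + 1, le_refl _, u, rfl⟩
      · exact Or.inr ⟨u, by rw [O_snoc]⟩

/-! ### Verification of the relations -/

/-- relation (1): `x_j x_i = x_i x_{j+1}` for `i < j` -/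
lemma R1 : ∀ i j, i < j → ∀ s : X, xf j (xf i s) = xf i (xf (j + 1) s) := by
  intro i
  induction i with
  | zero =>
    intro j h s
    obtain ⟨j, rfl⟩ : ∃ j', j = j' + 1 := ⟨j - 1, by omega⟩
    obtain ⟨b, b', u, rfl⟩ := eta2 s
    cases b <;> cases b' <;> simp
  | succ i ih =>
    intro j h s
    obtain ⟨j, rfl⟩ : ∃ j', j = j' + 1 := ⟨j - 1, by omega⟩
    obtain ⟨b, u, rfl⟩ := eta1 s
    cases b
    · simp
    · simp [ih j (by omega)]

/-- relation (4): `c_n = x_n c_{n+1}` -/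
lemma R4 (n : ℕ) (s : X) : xf n (cf (n + 1) s) = cf n s := by
  rcases dec (n + 1) s with ⟨j, hj, w, rfl⟩ | ⟨w, rfl⟩
  · cases j with
    | zero =>
      simp only [O_zero]
      rw [cfA, cfA]
      simpa using xf_big n 0 w
    | succ j =>
      rcases Nat.lt_or_ge j n with hlt | hge
      · rw [cfB (n + 1) j (by omega), cfB n j hlt, xfA n j hlt]
      · have hj' : j = n := by omega
        subst hj'
        rw [cfB (j + 1) j (by omega), xfB, x0f_Z, cfC]
  · rw [cfC (n + 1) w]
    have e1 : O (n + 1) (cns false w) = O n (O 1 (cns false w)) := (O_add n 1 _).symm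
    rw [e1, xfB]
    have e2 : x0f (O 1 (cns false w)) = cns false (O 1 w) := x0f_OZ w
    rw [e2]
    have e3 : O (n + 2) w = O (n + 1) (O 1 w) := (O_add (n + 1) 1 w).symm
    rw [e3, cfC]

/-- relation (2): `x_k c_{n+1} = c_n x_{k+1}` for `k < n` -/
lemma R2 : ∀ k n, k < n → ∀ s : X, xf k (cf (n + 1) s) = cf n (xf (k + 1) s) := by
  intro k
  induction k with
  | zero =>
    intro n h s
    obtain ⟨m, rfl⟩ : ∃ m, n = m + 1 := ⟨n - 1, by omega⟩
    rcases dec (m + 2) s with ⟨j, hj, w, rfl⟩ | ⟨w, rfl⟩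
    · match j, hj with
      | 0, _ =>
        simp only [O_zero]
        rw [cfA, xf_succ_Z, cfA, xf_zero]
        exact x0f_OO (O (m + 1) w)
      | 1, _ =>
        have e : O 1 (cns false w) = cns true (cns false w) := rfl
        rw [e, cf_succ_OZ, xf_zero, x0f_Z, xf_succ_O, xf_zero, x0f_Z, cf_succ_OZ]
      | 2, _ =>
        rw [cfB (m + 2) 1 (by omega), xf_zero]
        have e1 : O 2 (cns false w) = cns true (O 1 (cns false w)) := rfl
        rw [e1, xf_succ_O, xf_zero]
        have e2 : O 1 (cns false w) = cns true (cns false w) := rfl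
        rw [e2, x0f_OZ, cf_succ_OZ]
      | (j + 3), hj =>
        rw [cfB (m + 2) (j + 2) (by omega), xf_zero]
        have e1 : O (j + 3) (cns false w) = O (1 + j + 2) (cns false w) := by ring_nf
        rw [e1, xf_big 1 j]
        have e4 : O (1 + j + 1) (cns false w) = O (j + 2) (cns false w) := by ring_nf
        rw [e4, cfB (m + 1) (j + 1) (by omega)]
        exact x0f_OO (O j (cns false w))
    · rw [cfC (m + 2) w, xf_zero]
      have e1 : O (m + 3) w = O (1 + m + 2) w := by ring_nf
      rw [e1, xf_big 1 m]
      have e4 : O (1 + m + 1) w = O (m + 2) w := by ring_nf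
      rw [e4, cfC (m + 1) w]
      exact x0f_OO (O m (cns false w))
  | succ k ih =>
    intro n h s
    obtain ⟨m, rfl⟩ : ∃ m, n = m + 1 := ⟨n - 1, by omega⟩
    obtain ⟨b, u, rfl⟩ := eta1 s
    cases b
    · rw [cf_succ_Z, xf_succ_O, ih m (by omega), xf_succ_Z, xf_succ_Z, cf_succ_Z]
    · obtain ⟨b', v, rfl⟩ := eta1 u
      cases b'
      · rw [cf_succ_OZ, xf_succ_Z, xf_succ_O, xf_succ_Z, cf_succ_OZ]
      · rw [cf_succ_OO, xf_succ_O, ih m (by omega), xf_succ_O, xf_succ_O, xf_succ_O,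
          cf_succ_OO]

/-- relation (3): `c_n x_0 = c_{n+1}²` -/
lemma R3 (n : ℕ) (s : X) : cf n (xf 0 s) = cf (n + 1) (cf (n + 1) s) := by
  rcases dec (n + 2) s with ⟨j, hj, w, rfl⟩ | ⟨w, rfl⟩
  · match j, hj with
    | 0, _ =>
      simp only [O_zero]
      rw [xf_zero, x0f_Z, cfA, cfA, cfC]
    | 1, _ =>
      have e : O 1 (cns false w) = cns true (cns false w) := rfl
      rw [e, xf_zero, x0f_OZ, cfA, cf_succ_OZ, cfA]
      exact (O_snoc (n + 1) w).symm ▸ rfl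
    | (m + 2), hj =>
      rcases Nat.lt_or_ge m n with hlt | hge
      · rw [xf_zero]
        have e1 : O (m + 2) (cns false w) = cns true (cns true (O m (cns false w))) := rfl
        rw [e1, x0f_OO]
        have e2 : cns true (O m (cns false w)) = O (m + 1) (cns false w) := rfl
        rw [e2, cfB n m hlt]
        have e3 : cns true (O (m + 1) (cns false w)) = O (m + 2) (cns false w) := rfl
        rw [e3, cfB (n + 1) (m + 1) (by omega), cfB (n + 1) m (by omega)]
      · have hm : m = n := by omega
        subst hm
        rw [xf_zero]
        have e1 : O (m + 2) (cns false w) = cns true (cns true (O m (cns false w))) := rfl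
        rw [e1, x0f_OO]
        have e2 : cns true (O m (cns false w)) = O (m + 1) (cns false w) := rfl
        rw [e2, cfC m]
        have e3 : cns true (O (m + 1) (cns false w)) = O (m + 2) (cns false w) := rfl
        rw [e3, cfC (m + 1), cfB (m + 1) m (by omega)]
  · rw [xf_zero]
    have e1 : O (n + 3) w = cns true (cns true (O (n + 1) w)) := rfl
    rw [e1, x0f_OO]
    have e2 : cns true (O (n + 1) w) = O (n + 1) (O 1 w) := by
      rw [O_add]
      rfl
    rw [e2, cfC n]
    have e3 : cns true (O (n + 1) (O 1 w)) = O (n + 2) (O 1 w) := rfl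
    rw [e3, cfC (n + 1), cfB (n + 1) n (by omega)]

/-! ### Order of `cf n` -/

lemma D1 (n : ℕ) : ∀ j, j ≤ n → ∀ w : X, (cf n)^[j + 1] (O j (cns false w)) = O (n + 1) w := by
  intro j
  induction j with
  | zero =>
    intro _ w
    simpa using cfA n w
  | succ j ih =>
    intro hj w
    rw [Function.iterate_succ_apply (cf n) (j + 1), cfB n j (by omega), ih (by omega)]

lemma D2 (n : ℕ) : ∀ a b, a + b = n → ∀ w : X,
    (cf n)^[a] (O n (cns false w)) = O b (cns false w) := by
  intro a
  induction a with
  | zero =>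
    intro b hb w
    obtain rfl : b = n := by omega
    rfl
  | succ a ih =>
    intro b hb w
    rw [Function.iterate_succ_apply' (cf n), ih (b + 1) (by omega), cfB n b (by omega)]

/-- relation (5): `c_n^{n+2} = 1` -/
lemma R5 (n : ℕ) (s : X) : (cf n)^[n + 2] s = s := by
  rcases dec n s with ⟨j, hj, w, rfl⟩ | ⟨w, rfl⟩
  · have e : n + 2 = (n - j + 1) + (j + 1) := by omega
    rw [e, Function.iterate_add_apply, D1 n j hj w,
      Function.iterate_succ_apply (cf n) (n - j), cfC n w, D2 n (n - j) j (by omega)]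
  · rw [Function.iterate_succ_apply (cf n) (n + 1), cfC n w,
      Function.iterate_succ_apply' (cf n) n, D2 n n 0 (by omega), O_zero, cfA]

/-- the base point of the free orbit -/
def z : X := fun _ => false

lemma z_eq : z = cns false z := by
  funext i; cases i <;> rfl

lemma orbit_ne (n k : ℕ) (h1 : 1 ≤ k) (h2 : k ≤ n + 1) : (cf n)^[k] z ≠ z := by
  match k, h1 with
  | 1, _ =>
    rw [Function.iterate_one, z_eq, cfA]
    intro hc
    have := congrFun hc 0
    simp at this
  | (a + 2), _ =>
    rw [Function.iterate_succ_apply (cf n), z_eq, cfA,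
      Function.iterate_succ_apply (cf n), cfC n z, D2 n a (n - a) (by omega)]
    intro hc
    have := congrFun hc 0
    obtain ⟨m, hm⟩ : ∃ m, n - a = m + 1 := ⟨n - a - 1, by omega⟩
    rw [hm] at this
    simp at this


/-! ### The permutations and the homomorphism from `T` -/

def Xp (i : ℕ) : Equiv.Perm X := ⟨xf i, xif i, xf_li i, xf_ri i⟩

def Cp (n : ℕ) : Equiv.Perm X where
  toFun := cf n
  invFun := (cf n)^[n + 1]
  left_inv := fun s => by
    rw [← Function.iterate_succ_apply (cf n) (n + 1) s]
    exact R5 n s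
  right_inv := fun s => by
    rw [← Function.iterate_succ_apply' (cf n) (n + 1) s]
    exact R5 n s

@[simp] lemma Xp_apply (i : ℕ) (s : X) : Xp i s = xf i s := rfl
@[simp] lemma Cp_apply (n : ℕ) (s : X) : Cp n s = cf n s := rfl

lemma Cp_pow_apply (n k : ℕ) (s : X) : (Cp n ^ k) s = (cf n)^[k] s := by
  induction k generalizing s with
  | zero => rfl
  | succ k ih =>
    rw [pow_succ, Equiv.Perm.mul_apply, Cp_apply, ih, ← Function.iterate_succ_apply]

lemma P1 {i j : ℕ} (h : i < j) : Xp j * Xp i = Xp i * Xp (j + 1) :=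
  Equiv.ext fun s => R1 i j h s

lemma P2 {k n : ℕ} (h : k < n) : Xp k * Cp (n + 1) = Cp n * Xp (k + 1) :=
  Equiv.ext fun s => R2 k n h s

lemma P3 (n : ℕ) : Cp n * Xp 0 = Cp (n + 1) ^ 2 :=
  Equiv.ext fun s => by
    rw [Equiv.Perm.mul_apply, pow_two, Equiv.Perm.mul_apply]
    exact R3 n s

lemma P4 (n : ℕ) : Cp n = Xp n * Cp (n + 1) :=
  Equiv.ext fun s => (R4 n s).symm

lemma P5 (n : ℕ) : Cp n ^ (n + 2) = 1 :=
  Equiv.ext fun s => by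
    rw [Cp_pow_apply]
    exact R5 n s

/-- the images of the generators -/
def fgen : ℕ ⊕ ℕ → Equiv.Perm X := Sum.elim Xp Cp

lemma hrel : ∀ r ∈ TRel, FreeGroup.lift fgen r = 1 := by
  rintro r (⟨i, j, hij, rfl⟩ | ⟨k, n, hkn, rfl⟩ | ⟨n, rfl⟩ | ⟨n, rfl⟩ | ⟨n, rfl⟩) <;>
    simp only [map_mul, map_inv, map_pow, FreeGroup.lift_apply_of, fgen, Sum.elim_inl, Sum.elim_inr,
      mul_inv_eq_one]
  · exact P1 hij
  · exact P2 hkn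
  · exact P3 n
  · exact P4 n
  · exact P5 n

/-- the homomorphism from Thompson's group `T` to the permutations of Cantor space -/
def φ : ThompsonT →* Equiv.Perm X := PresentedGroup.toGroup hrel

end TAux

open TAux in
/-- The torsion generator `c_n` of Thompson's group `T` has order exactly `n + 2`. -/
theorem orderOf_c (n : ℕ) : orderOf (c n) = n + 2 := by
  have hpow : (c n) ^ (n + 2) = 1 := by
    have hmem : ((FreeGroup.of (Sum.inr n) : FreeGroup (ℕ ⊕ ℕ)) ^ (n + 2)) ∈
        Subgroup.normalClosure TRel :=
      Subgroup.subset_normalClosure (Or.inr (Or.inr (Or.inr (Or.inr ⟨n, rfl⟩))))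
    show (PresentedGroup.mk TRel (FreeGroup.of (Sum.inr n))) ^ (n + 2) = 1
    rw [← map_pow]
    exact (QuotientGroup.eq_one_iff _).mpr hmem
  have hdvd : orderOf (c n) ∣ n + 2 := orderOf_dvd_of_pow_eq_one hpow
  have himg : φ (c n) = Cp n := PresentedGroup.toGroup.of hrel
  have hord : orderOf (Cp n) = n + 2 := by
    rw [orderOf_eq_iff (by omega)]
    refine ⟨P5 n, fun m hm hm' hcon => ?_⟩
    have hz : (Cp n ^ m) z = z := by rw [hcon]; rfl
    rw [Cp_pow_apply] at hz
    exact orbit_ne n m (by omega) (by omega) hz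
  have hdvd2 : (n + 2) ∣ orderOf (c n) := by
    rw [← hord, ← himg]
    exact orderOf_map_dvd φ (c n)
  exact Nat.dvd_antisymm hdvd hdvd2
end

section
/- For every integer n ≥ 0: in Thompson's group F, |x_0^n|_{S_F} = n and |x_1^n|_{S_F} = n where S_F = {x_0, x_1}; and in Thompson's group T, |φ(x_0)^n|_{S_T} = n and |φ(x_1)^n|_{S_T} = n where S_T = {x_0, x_1, c_0}. -/
/-- Relators of the standard infinite presentation of Thompson's group `F`. -/
def FRel : Set (FreeGroup ℕ) :=
  { r | ∃ i j : ℕ, i < j ∧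
      r = FreeGroup.of j * FreeGroup.of i * (FreeGroup.of i * FreeGroup.of (j + 1))⁻¹ }

/-- Thompson's group `F`. -/
abbrev ThompsonF : Type := PresentedGroup FRel

/-- The generator `x_i` of `F`. -/
def xF (i : ℕ) : ThompsonF := PresentedGroup.of i

/-- The word length of `g` with respect to a generating set `S`: the least `n` such
that `g` is a product of `n` elements of `S ∪ S⁻¹`. -/
noncomputable def wordLength {G : Type*} [Group G] (S : Set G) (g : G) : ℕ :=
  sInf {n : ℕ | ∃ w : List G, w.length = n ∧ (∀ a ∈ w, a ∈ S ∨ a⁻¹ ∈ S) ∧ w.prod = g}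

/-! `T` acts on the Cantor set `Stream' Bool` of binary expansions: `x₀` maps
`0w ↦ 00w`, `10w ↦ 01w`, `11w ↦ 1w`, each `xᵢ₊₁` acts as `xᵢ` behind a leading `1`, and `c₀` flips
the first digit. Each of `x₀^±1`, `x₁^±1`, `c₀^±1` replaces a prefix of length at most `3` by one at
most one digit longer, so it moves the index from which a stream is constant by at most one (as long
as that index is at least `3`). Since `x₀ⁿ` maps `1ⁿ⁺³0^∞` to `1³0^∞` and `x₁ⁿ` maps `1ⁿ⁺⁴0^∞`
to `1⁴0^∞`, every word representing these powers has length at least `n`. In `F` the same bound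
follows by pushing words forward along `φ`. -/

open scoped Stream'

namespace Stream'

variable {α : Type*}

theorem forall_cons {p : Stream' α → Prop} (h : ∀ a t, p (a :: t)) (s : Stream' α) : p s := by
  rw [← Stream'.eta s]
  exact h _ _

def EventuallyConstFrom (N : ℕ) (s : Stream' α) : Prop :=
  ∃ a, s.drop N = const a

theorem EventuallyConstFrom.mono {M N : ℕ} {s : Stream' α} (h : EventuallyConstFrom N s)
    (hNM : N ≤ M) : EventuallyConstFrom M s := by
  obtain ⟨a, ha⟩ := h
  obtain ⟨k, rfl⟩ := Nat.exists_eq_add_of_le hNM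
  exact ⟨a, by rw [← drop_drop, ha, drop_const]⟩

theorem eventuallyConstFrom_drop_iff {k M : ℕ} {s : Stream' α} :
    EventuallyConstFrom M (s.drop k) ↔ EventuallyConstFrom (k + M) s := by
  simp only [EventuallyConstFrom, drop_drop]

theorem EventuallyConstFrom.append {M : ℕ} {s : Stream' α} (h : EventuallyConstFrom M s)
    (l : List α) : EventuallyConstFrom (l.length + M) (l ++ₛ s) := by
  rwa [← eventuallyConstFrom_drop_iff, drop_append_stream]

theorem eventuallyConstFrom_append_const (l : List α) (a : α) :
    EventuallyConstFrom l.length (l ++ₛ const a) :=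
  EventuallyConstFrom.append (M := 0) ⟨a, rfl⟩ l

theorem le_of_eventuallyConstFrom_replicate_append_const {N m : ℕ} {a b : α} (hab : a ≠ b)
    (h : EventuallyConstFrom N (List.replicate m a ++ₛ const b)) : m ≤ N := by
  by_contra! hlt
  obtain ⟨j, rfl⟩ : ∃ j, m = j + 1 := ⟨m - 1, by omega⟩
  obtain ⟨c, hc⟩ := h.mono (show N ≤ j by omega)
  have hdrop := drop_append_stream (List.replicate j a) ([a] ++ₛ const b)
  rw [List.length_replicate] at hdrop
  rw [List.replicate_succ', append_append_stream, hdrop] at hc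
  exact hab ((congrArg head hc).trans (congrArg (get · 1) hc).symm)

def IsPrefixRewrite (k : ℕ) (g : Stream' α → Stream' α) : Prop :=
  ∀ s, ∃ l : List α, l.length ≤ k + 1 ∧ g s = l ++ₛ s.drop k

theorem IsPrefixRewrite.eventuallyConstFrom {k N : ℕ} {g : Stream' α → Stream' α}
    (hg : IsPrefixRewrite k g) (hk : k ≤ N) {s : Stream' α} (hs : EventuallyConstFrom N s) :
    EventuallyConstFrom (N + 1) (g s) := by
  obtain ⟨l, hl, hgs⟩ := hg s
  have hdrop : EventuallyConstFrom (N - k) (s.drop k) := by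
    rwa [eventuallyConstFrom_drop_iff, Nat.add_sub_cancel' hk]
  rw [hgs]
  exact (hdrop.append l).mono (by omega)

end Stream'

open Stream'

theorem eventuallyConstFrom_of_prod_apply {G α : Type*} [Group G]
    (ρ : G →* Equiv.Perm (Stream' α)) {S : Set G} {K : ℕ}
    (hS : ∀ a, a ∈ S ∨ a⁻¹ ∈ S → ∃ k ≤ K, IsPrefixRewrite k (ρ a))
    {w : List G} (hw : ∀ a ∈ w, a ∈ S ∨ a⁻¹ ∈ S) {N : ℕ} (hN : K ≤ N) {s : Stream' α}
    (h : EventuallyConstFrom N (ρ w.prod s)) : EventuallyConstFrom (N + w.length) s := by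
  induction w generalizing N with
  | nil => simpa using h
  | cons a w ih =>
    -- the letter `a⁻¹` undoes `a`, so its rewrite bound runs the word backwards
    obtain ⟨k, hkK, hk⟩ := hS a⁻¹ (by rw [inv_inv]; exact (hw a List.mem_cons_self).symm)
    have hstep : EventuallyConstFrom (N + 1) (ρ w.prod s) := by
      simpa [map_mul] using hk.eventuallyConstFrom (by omega) h
    simpa [Nat.add_assoc, Nat.add_comm 1] using
      ih (fun b hb => hw b (List.mem_cons_of_mem a hb)) (by omega) hstep

section WordLength

variable {G H : Type*} [Group G] [Group H]

theorem wordLength_le_length {S : Set G} {w : List G} (hw : ∀ a ∈ w, a ∈ S ∨ a⁻¹ ∈ S) :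
    wordLength S w.prod ≤ w.length :=
  Nat.sInf_le ⟨w, rfl, hw, rfl⟩

theorem wordLength_pow_eq {S : Set G} {a : G} (ha : a ∈ S) {n : ℕ}
    (h : ∀ w : List G, (∀ b ∈ w, b ∈ S ∨ b⁻¹ ∈ S) → w.prod = a ^ n → n ≤ w.length) :
    wordLength S (a ^ n) = n := by
  have hrep : ∀ b ∈ List.replicate n a, b ∈ S ∨ b⁻¹ ∈ S := fun b hb =>
    Or.inl (List.eq_of_mem_replicate hb ▸ ha)
  refine le_antisymm ?_ (le_csInf ⟨n, _, List.length_replicate, hrep, List.prod_replicate n a⟩ ?_)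
  · simpa using wordLength_le_length hrep
  · rintro _ ⟨w, rfl, hw, hprod⟩
    exact h w hw hprod

theorem wordLength_pow_eq_of_map (f : G →* H) {S : Set G} {S' : Set H} (hf : Set.MapsTo f S S')
    {a : G} (ha : a ∈ S) {n : ℕ} (h : wordLength S' (f a ^ n) = n) : wordLength S (a ^ n) = n :=
  wordLength_pow_eq ha fun w hw hprod => by
    have hw' : ∀ b ∈ w.map f, b ∈ S' ∨ b⁻¹ ∈ S' := by
      simp only [List.mem_map]
      rintro _ ⟨b, hb, rfl⟩
      rw [← map_inv]
      exact (hw b hb).imp (fun h => hf h) (fun h => hf h)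
    calc n = wordLength S' (w.map f).prod := by rw [← map_list_prod, hprod, map_pow, h]
      _ ≤ (w.map f).length := wordLength_le_length hw'
      _ = w.length := List.length_map _

end WordLength

namespace Thompson

open Equiv

def x0Fun (s : Stream' Bool) : Stream' Bool :=
  match s.head with
  | false => false :: s
  | true => match s.tail.head with
    | false => false :: true :: s.tail.tail
    | true => s.tail

def x0InvFun (s : Stream' Bool) : Stream' Bool :=
  match s.head with
  | true => true :: s
  | false => match s.tail.head with
    | true => true :: false :: s.tail.tail
    | false => s.tail

def x0Perm : Perm (Stream' Bool) where
  toFun := x0Fun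
  invFun := x0InvFun
  left_inv := forall_cons fun a => forall_cons fun b t => by cases a <;> cases b <;> rfl
  right_inv := forall_cons fun a => forall_cons fun b t => by cases a <;> cases b <;> rfl

def flipHead : Perm (Stream' Bool) where
  toFun s := (!s.head) :: s.tail
  invFun s := (!s.head) :: s.tail
  left_inv := forall_cons fun a t => by cases a <;> rfl
  right_inv := forall_cons fun a t => by cases a <;> rfl

def swapLeavesFun (s : Stream' Bool) : Stream' Bool :=
  match s.head with
  | false => true :: s
  | true => match s.tail.head with
    | false => s.tail
    | true => s

def swapLeaves : Perm (Stream' Bool) where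
  toFun := swapLeavesFun
  invFun := swapLeavesFun
  left_inv := forall_cons fun a => forall_cons fun b t => by cases a <;> cases b <;> rfl
  right_inv := forall_cons fun a => forall_cons fun b t => by cases a <;> cases b <;> rfl

def rightLiftFun (f : Stream' Bool → Stream' Bool) (s : Stream' Bool) : Stream' Bool :=
  match s.head with
  | false => s
  | true => true :: f s.tail

def rightLift : Perm (Stream' Bool) →* Perm (Stream' Bool) where
  toFun e :=
    { toFun := rightLiftFun e
      invFun := rightLiftFun e.symm
      left_inv := forall_cons fun a t => by
        cases a
        · rfl
        · exact congrArg (Stream'.cons true) (e.symm_apply_apply t)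
      right_inv := forall_cons fun a t => by
        cases a
        · rfl
        · exact congrArg (Stream'.cons true) (e.apply_symm_apply t) }
  map_one' := Equiv.ext <| forall_cons fun a t => by cases a <;> rfl
  map_mul' _ _ := Equiv.ext <| forall_cons fun a t => by cases a <;> rfl

def xPerm : ℕ → Perm (Stream' Bool)
  | 0 => x0Perm
  | i + 1 => rightLift (xPerm i)

-- `cPerm n` rotates the leaves `0, 10, …, 1ⁿ0, 1ⁿ⁺¹` (`1ᵏ⁺¹0 ↦ 1ᵏ0`, `0 ↦ 1ⁿ⁺¹`); this recursive
-- form makes relations (2)–(4) provable by induction on `n`.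
def cPerm : ℕ → Perm (Stream' Bool)
  | 0 => flipHead
  | n + 1 => rightLift (cPerm n) * swapLeaves

theorem x0Perm_mul_rightLift_rightLift (e : Perm (Stream' Bool)) :
    x0Perm * rightLift (rightLift e) = rightLift e * x0Perm :=
  Equiv.ext <| forall_cons fun a => forall_cons fun b t => by cases a <;> cases b <;> rfl

theorem swapLeaves_mul_rightLift_rightLift (e : Perm (Stream' Bool)) :
    swapLeaves * rightLift (rightLift e) = rightLift (rightLift e) * swapLeaves :=
  Equiv.ext <| forall_cons fun a => forall_cons fun b t => by cases a <;> cases b <;> rfl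

theorem x0Perm_mul_rightLift_flipHead_mul_swapLeaves :
    x0Perm * (rightLift flipHead * swapLeaves) = flipHead :=
  Equiv.ext <| forall_cons fun a => forall_cons fun b t => by cases a <;> cases b <;> rfl

theorem x0Perm_mul_rightLift_swapLeaves_mul_swapLeaves :
    x0Perm * rightLift swapLeaves * swapLeaves = swapLeaves * rightLift x0Perm :=
  Equiv.ext <| forall_cons fun a => forall_cons fun b => forall_cons fun c t => by
    cases a <;> cases b <;> cases c <;> rfl

theorem flipHead_mul_x0Perm :
    flipHead * x0Perm = (rightLift flipHead * swapLeaves) ^ 2 :=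
  Equiv.ext <| forall_cons fun a => forall_cons fun b t => by cases a <;> cases b <;> rfl

theorem xPerm_mul_xPerm {i j : ℕ} (hij : i < j) : xPerm j * xPerm i = xPerm i * xPerm (j + 1) := by
  induction i generalizing j with
  | zero =>
    obtain ⟨m, rfl⟩ : ∃ m, j = m + 1 := ⟨j - 1, by omega⟩
    exact (x0Perm_mul_rightLift_rightLift (xPerm m)).symm
  | succ i ih =>
    obtain ⟨m, rfl⟩ : ∃ m, j = m + 1 := ⟨j - 1, by omega⟩
    simp only [xPerm, ← map_mul, ih (by omega : i < m)]

theorem xPerm_mul_cPerm_succ (n : ℕ) : xPerm n * cPerm (n + 1) = cPerm n := by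
  induction n with
  | zero => exact x0Perm_mul_rightLift_flipHead_mul_swapLeaves
  | succ n ih => rw [xPerm, cPerm, ← mul_assoc, ← map_mul, ih, cPerm]

theorem xPerm_mul_cPerm {k n : ℕ} (hkn : k < n) :
    xPerm k * cPerm (n + 1) = cPerm n * xPerm (k + 1) := by
  induction k generalizing n with
  | zero =>
    obtain ⟨m, rfl⟩ : ∃ m, n = m + 1 := ⟨n - 1, by omega⟩
    calc xPerm 0 * cPerm (m + 2)
        = x0Perm * rightLift (rightLift (cPerm m)) * (rightLift swapLeaves * swapLeaves) := by
          simp only [cPerm, xPerm, map_mul, mul_assoc]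
      _ = rightLift (cPerm m) * (x0Perm * rightLift swapLeaves * swapLeaves) := by
          rw [x0Perm_mul_rightLift_rightLift]; simp only [mul_assoc]
      _ = cPerm (m + 1) * xPerm 1 := by
          rw [x0Perm_mul_rightLift_swapLeaves_mul_swapLeaves]; simp only [cPerm, xPerm, mul_assoc]
  | succ k ih =>
    obtain ⟨m, rfl⟩ : ∃ m, n = m + 1 := ⟨n - 1, by omega⟩
    calc xPerm (k + 1) * cPerm (m + 2)
        = rightLift (xPerm k * cPerm (m + 1)) * swapLeaves := by
          simp only [cPerm, xPerm, map_mul, mul_assoc]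
      _ = rightLift (cPerm m) * (rightLift (rightLift (xPerm k)) * swapLeaves) := by
          rw [ih (by omega)]; simp only [xPerm, map_mul, mul_assoc]
      _ = cPerm (m + 1) * xPerm (k + 2) := by
          rw [← swapLeaves_mul_rightLift_rightLift]; simp only [cPerm, xPerm, mul_assoc]

theorem cPerm_mul_xPerm_zero (n : ℕ) : cPerm n * xPerm 0 = cPerm (n + 1) ^ 2 := by
  induction n with
  | zero => exact flipHead_mul_x0Perm
  | succ n ih =>
    have hc := xPerm_mul_cPerm_succ n
    have hc' := xPerm_mul_cPerm_succ (n + 1)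
    have hxc := xPerm_mul_cPerm (k := n) (n := n + 1) (by omega)
    calc cPerm (n + 1) * xPerm 0
        = (xPerm n)⁻¹ * (cPerm n * xPerm 0) := by rw [← hc]; group
      _ = (xPerm n)⁻¹ * (cPerm (n + 1) * xPerm (n + 1)) * cPerm (n + 1 + 1) := by
          rw [ih, sq]; nth_rewrite 2 [← hc']; group
      _ = cPerm (n + 1 + 1) ^ 2 := by rw [← hxc, sq]; group

theorem cPerm_false (n : ℕ) (w : Stream' Bool) :
    cPerm n (false :: w) = List.replicate (n + 1) true ++ₛ w := by
  induction n with
  | zero => rfl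
  | succ n ih => exact congrArg (Stream'.cons true) ih

theorem cPerm_replicate_succ_false {k n : ℕ} (hkn : k < n) (w : Stream' Bool) :
    cPerm n (List.replicate (k + 1) true ++ₛ false :: w) =
      List.replicate k true ++ₛ false :: w := by
  induction n generalizing k with
  | zero => omega
  | succ n ih =>
    cases k with
    | zero => rfl
    | succ k => exact congrArg (Stream'.cons true) (ih (by omega))

theorem cPerm_replicate_succ (n : ℕ) (w : Stream' Bool) :
    cPerm n (List.replicate (n + 1) true ++ₛ w) = List.replicate n true ++ₛ false :: w := by
  induction n with
  | zero => rfl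
  | succ n ih => exact congrArg (Stream'.cons true) ih

theorem cPerm_pow_replicate_false {j m n : ℕ} (hjm : j ≤ m) (hmn : m ≤ n) (w : Stream' Bool) :
    (cPerm n ^ j) (List.replicate m true ++ₛ false :: w) =
      List.replicate (m - j) true ++ₛ false :: w := by
  induction j with
  | zero => rfl
  | succ j ih =>
    obtain ⟨i, hi⟩ : ∃ i, m - j = i + 1 := ⟨m - j - 1, by omega⟩
    rw [pow_succ', Perm.mul_apply, ih (by omega), hi, cPerm_replicate_succ_false (by omega)]
    congr 2
    omega

theorem exists_eq_replicate_append (n : ℕ) (s : Stream' Bool) :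
    (∃ k ≤ n, ∃ w, s = List.replicate k true ++ₛ false :: w) ∨
      ∃ w, s = List.replicate (n + 1) true ++ₛ w := by
  induction n generalizing s with
  | zero =>
    revert s
    refine forall_cons fun a t => ?_
    cases a
    · exact Or.inl ⟨0, le_rfl, t, rfl⟩
    · exact Or.inr ⟨t, rfl⟩
  | succ n ih =>
    revert s
    refine forall_cons fun a t => ?_
    cases a
    · exact Or.inl ⟨0, by omega, t, rfl⟩
    · rcases ih t with ⟨k, hk, w, rfl⟩ | ⟨w, rfl⟩
      · exact Or.inl ⟨k + 1, by omega, w, rfl⟩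
      · exact Or.inr ⟨w, rfl⟩

theorem cPerm_pow_add_two (n : ℕ) : cPerm n ^ (n + 2) = 1 := by
  ext1 s
  rcases exists_eq_replicate_append n s with ⟨k, hk, w, rfl⟩ | ⟨w, rfl⟩
  · rw [show n + 2 = (n - k) + 1 + 1 + k by omega, pow_add, pow_succ, pow_succ]
    simp only [Perm.mul_apply, Perm.one_apply]
    rw [cPerm_pow_replicate_false le_rfl hk, Nat.sub_self, List.replicate_zero,
      nil_append_stream, cPerm_false, cPerm_replicate_succ,
      cPerm_pow_replicate_false (Nat.sub_le n k) le_rfl, Nat.sub_sub_self hk]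
  · rw [show n + 2 = 1 + n + 1 by omega, pow_succ, pow_add, pow_one]
    simp only [Perm.mul_apply, Perm.one_apply]
    rw [cPerm_replicate_succ, cPerm_pow_replicate_false le_rfl le_rfl, Nat.sub_self,
      List.replicate_zero, nil_append_stream, cPerm_false]

theorem lift_sumElim_eq_one_of_mem_TRel :
    ∀ r ∈ TRel, FreeGroup.lift (Sum.elim xPerm cPerm) r = 1 := by
  rintro r (⟨i, j, hij, rfl⟩ | ⟨k, n, hkn, rfl⟩ | ⟨n, rfl⟩ | ⟨n, rfl⟩ | ⟨n, rfl⟩) <;>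
    simp only [map_mul, map_inv, map_pow, FreeGroup.lift_apply_of, Sum.elim_inl, Sum.elim_inr,
      mul_inv_eq_one]
  · exact xPerm_mul_xPerm hij
  · exact xPerm_mul_cPerm hkn
  · exact cPerm_mul_xPerm_zero n
  · exact (xPerm_mul_cPerm_succ n).symm
  · exact cPerm_pow_add_two n

noncomputable def cantorRep : ThompsonT →* Perm (Stream' Bool) :=
  PresentedGroup.toGroup lift_sumElim_eq_one_of_mem_TRel

@[simp] theorem cantorRep_x (i : ℕ) : cantorRep (x i) = xPerm i :=
  PresentedGroup.toGroup.of lift_sumElim_eq_one_of_mem_TRel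

@[simp] theorem cantorRep_c (n : ℕ) : cantorRep (c n) = cPerm n :=
  PresentedGroup.toGroup.of lift_sumElim_eq_one_of_mem_TRel

theorem isPrefixRewrite_x0Perm : IsPrefixRewrite 2 x0Perm :=
  forall_cons fun a => forall_cons fun b t => by
    cases a <;> cases b
    exacts [⟨[false, false, false], by simp, rfl⟩, ⟨[false, false, true], by simp, rfl⟩,
      ⟨[false, true], by simp, rfl⟩, ⟨[true], by simp, rfl⟩]

theorem isPrefixRewrite_x0Perm_inv : IsPrefixRewrite 2 ⇑x0Perm⁻¹ :=
  forall_cons fun a => forall_cons fun b t => by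
    cases a <;> cases b
    exacts [⟨[false], by simp, rfl⟩, ⟨[true, false], by simp, rfl⟩,
      ⟨[true, true, false], by simp, rfl⟩, ⟨[true, true, true], by simp, rfl⟩]

theorem isPrefixRewrite_flipHead : IsPrefixRewrite 1 flipHead :=
  forall_cons fun a t => ⟨[!a], by simp, rfl⟩

theorem flipHead_inv : flipHead⁻¹ = flipHead := rfl

theorem isPrefixRewrite_rightLift {k : ℕ} {e : Perm (Stream' Bool)} (he : IsPrefixRewrite k e) :
    IsPrefixRewrite (k + 1) (rightLift e) :=
  forall_cons fun a t => by
    cases a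
    · exact ⟨(false :: t).take (k + 1), by simp, (append_take_drop _ _).symm⟩
    · obtain ⟨l, hl, hlt⟩ := he t
      exact ⟨true :: l, by simpa using hl, congrArg (Stream'.cons true) hlt⟩

theorem isPrefixRewrite_cantorRep {a : ThompsonT}
    (ha : a ∈ ({x 0, x 1, c 0} : Set ThompsonT) ∨ a⁻¹ ∈ ({x 0, x 1, c 0} : Set ThompsonT)) :
    ∃ k ≤ 3, IsPrefixRewrite k (cantorRep a) := by
  simp only [Set.mem_insert_iff, Set.mem_singleton_iff, inv_eq_iff_eq_inv] at ha
  rcases ha with (rfl | rfl | rfl) | (rfl | rfl | rfl)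
  · exact ⟨2, by omega, isPrefixRewrite_x0Perm⟩
  · exact ⟨3, le_rfl, isPrefixRewrite_rightLift isPrefixRewrite_x0Perm⟩
  · exact ⟨1, by omega, isPrefixRewrite_flipHead⟩
  · exact ⟨2, by omega, by simpa [xPerm] using isPrefixRewrite_x0Perm_inv⟩
  · exact ⟨3, le_rfl, by simpa [xPerm] using isPrefixRewrite_rightLift isPrefixRewrite_x0Perm_inv⟩
  · exact ⟨1, by omega, by simpa [cPerm, flipHead_inv] using isPrefixRewrite_flipHead⟩

theorem x0Perm_pow_replicate (n k : ℕ) (w : Stream' Bool) :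
    (x0Perm ^ n) (List.replicate (n + k + 1) true ++ₛ w) = List.replicate (k + 1) true ++ₛ w := by
  induction n with
  | zero => simp
  | succ n ih =>
    rw [pow_succ, Perm.mul_apply, show n + 1 + k + 1 = n + k + 1 + 1 by omega]
    exact ih

theorem le_length_of_cantorRep_prod {w : List ThompsonT}
    (hw : ∀ a ∈ w, a ∈ ({x 0, x 1, c 0} : Set ThompsonT) ∨ a⁻¹ ∈ ({x 0, x 1, c 0} : Set ThompsonT))
    {n k : ℕ} (hk : 3 ≤ k)
    (h : cantorRep w.prod (List.replicate (n + k) true ++ₛ const false) =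
      List.replicate k true ++ₛ const false) :
    n ≤ w.length := by
  have hend := eventuallyConstFrom_append_const (List.replicate k true) false
  rw [List.length_replicate, ← h] at hend
  have := le_of_eventuallyConstFrom_replicate_append_const (by decide : true ≠ false)
    (eventuallyConstFrom_of_prod_apply cantorRep
      (fun _ => isPrefixRewrite_cantorRep) hw hk hend)
  omega

theorem wordLength_x_zero_pow (n : ℕ) :
    wordLength ({x 0, x 1, c 0} : Set ThompsonT) (x 0 ^ n) = n :=
  wordLength_pow_eq (by simp) fun _ hw hprod => le_length_of_cantorRep_prod hw (k := 3) le_rfl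
    (by rw [hprod, map_pow, cantorRep_x]; exact x0Perm_pow_replicate n 2 _)

theorem wordLength_x_one_pow (n : ℕ) :
    wordLength ({x 0, x 1, c 0} : Set ThompsonT) (x 1 ^ n) = n :=
  wordLength_pow_eq (by simp) fun _ hw hprod => le_length_of_cantorRep_prod hw (k := 4) (by omega)
    (by
      rw [hprod, map_pow, cantorRep_x, xPerm, xPerm, ← map_pow]
      exact congrArg (Stream'.cons true) (x0Perm_pow_replicate n 2 _))

end Thompson

/-- The elements `x_0^n` and `x_1^n` have word length `n` both in `F` (with respect
to `{x_0, x_1}`) and in `T` (with respect to `{x_0, x_1, c_0}`). -/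
theorem wordLength_powers_of_generators (φ : ThompsonF →* ThompsonT)
    (hφ : ∀ i, φ (xF i) = x i) (n : ℕ) :
    wordLength ({xF 0, xF 1} : Set ThompsonF) (xF 0 ^ n) = n ∧
    wordLength ({xF 0, xF 1} : Set ThompsonF) (xF 1 ^ n) = n ∧
    wordLength ({x 0, x 1, c 0} : Set ThompsonT) (φ (xF 0) ^ n) = n ∧
    wordLength ({x 0, x 1, c 0} : Set ThompsonT) (φ (xF 1) ^ n) = n := by
  have hφS : Set.MapsTo φ {xF 0, xF 1} {x 0, x 1, c 0} := by
    rintro _ (rfl | rfl) <;> simp [hφ]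
  have hx0 : wordLength ({x 0, x 1, c 0} : Set ThompsonT) (φ (xF 0) ^ n) = n := by
    rw [hφ]; exact Thompson.wordLength_x_zero_pow n
  have hx1 : wordLength ({x 0, x 1, c 0} : Set ThompsonT) (φ (xF 1) ^ n) = n := by
    rw [hφ]; exact Thompson.wordLength_x_one_pow n
  exact ⟨wordLength_pow_eq_of_map φ hφS (by simp) hx0,
    wordLength_pow_eq_of_map φ hφS (by simp) hx1, hx0, hx1⟩
end

section
/- Thompson's group T is finitely presented: letting G be the group with presentation on three generators a, b, t with relators [a b^{-1}, a^{-1} b a] = 1, [a b^{-1}, a^{-2} b a^2] = 1, b·t_3 = t_2·(a^{-1} b a), t·a = t_2^2, b·t_2 = t, and t^3 = 1, where t_2 denotes a^{-1} t b and t_3 denotes a^{-2} t b^2, the homomorphism G → T determined by a ↦ x_0, b ↦ x_1, t ↦ c_1 is an isomorphism. -/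
open scoped commutatorElement in
/-- Relators of the finite presentation of Thompson's group `T` on three generators
`a, b, t` (sent to `x_0, x_1, c_1`), where `t_2 := a⁻¹ t b` and `t_3 := a⁻² t b²`. -/
def TFinRel : Set (FreeGroup (Fin 3)) :=
  let a : FreeGroup (Fin 3) := FreeGroup.of 0
  let b : FreeGroup (Fin 3) := FreeGroup.of 1
  let t : FreeGroup (Fin 3) := FreeGroup.of 2
  let t2 : FreeGroup (Fin 3) := a⁻¹ * t * b
  let t3 : FreeGroup (Fin 3) := a⁻¹ ^ 2 * t * b ^ 2
  { ⁅a * b⁻¹, a⁻¹ * b * a⁆,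
    ⁅a * b⁻¹, a⁻¹ ^ 2 * b * a ^ 2⁆,
    b * t3 * (t2 * (a⁻¹ * b * a))⁻¹,
    t * a * (t2 ^ 2)⁻¹,
    b * t2 * t⁻¹,
    t ^ 3 }

theorem PresentedGroup.lift_of_eq_one_of_mem {α : Type*} {rels : Set (FreeGroup α)}
    {r : FreeGroup α} (hr : r ∈ rels) : FreeGroup.lift (PresentedGroup.of (rels := rels)) r = 1 :=
  (FreeGroup.lift_unique (PresentedGroup.mk rels) fun _ => rfl).symm.trans
    (PresentedGroup.one_of_mem hr)

section Relations

variable {G : Type*} [Group G]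

structure FinFRelations (a b : G) : Prop where
  commute_two : Commute (a * b⁻¹) (a⁻¹ * b * a)
  commute_three : Commute (a * b⁻¹) (a⁻¹ ^ 2 * b * a ^ 2)

structure FinTRelations (a b t : G) : Prop extends FinFRelations a b where
  mul_t3 : b * (a⁻¹ ^ 2 * t * b ^ 2) = a⁻¹ * t * b * (a⁻¹ * b * a)
  t_mul : t * a = (a⁻¹ * t * b) ^ 2
  mul_t2 : b * (a⁻¹ * t * b) = t
  pow_three : t ^ 3 = 1

structure TRelations (X C : ℕ → G) : Prop where
  x_mul_x {i j : ℕ} : i < j → X j * X i = X i * X (j + 1)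
  x_mul_c {k n : ℕ} : k < n → X k * C (n + 1) = C n * X (k + 1)
  c_mul_x_zero (n : ℕ) : C n * X 0 = C (n + 1) ^ 2
  c_eq (n : ℕ) : C n = X n * C (n + 1)
  c_pow (n : ℕ) : C n ^ (n + 2) = 1

open scoped commutatorElement in
theorem forall_mem_TFinRel_lift_eq_one_iff (f : Fin 3 → G) :
    (∀ r ∈ TFinRel, FreeGroup.lift f r = 1) ↔ FinTRelations (f 0) (f 1) (f 2) := by
  simp only [TFinRel, Set.mem_insert_iff, Set.mem_singleton_iff, forall_eq_or_imp, forall_eq,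
    map_commutatorElement, commutatorElement_eq_one_iff_mul_comm, map_mul, map_inv, map_pow,
    mul_inv_eq_one, FreeGroup.lift_apply_of]
  exact ⟨fun ⟨h₁, h₂, h₃, h₄, h₅, h₆⟩ => ⟨⟨h₁, h₂⟩, h₃, h₄, h₅, h₆⟩,
    fun ⟨⟨h₁, h₂⟩, h₃, h₄, h₅, h₆⟩ => ⟨h₁, h₂, h₃, h₄, h₅, h₆⟩⟩

theorem forall_mem_TRel_lift_eq_one_iff (X C : ℕ → G) :
    (∀ r ∈ TRel, FreeGroup.lift (Sum.elim X C) r = 1) ↔ TRelations X C := by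
  constructor
  · intro h
    refine ⟨fun hij => ?_, fun hkn => ?_, fun n => ?_, fun n => ?_, fun n => ?_⟩
    · exact mul_inv_eq_one.mp (by simpa using h _ (Or.inl ⟨_, _, hij, rfl⟩))
    · exact mul_inv_eq_one.mp (by simpa using h _ (Or.inr (Or.inl ⟨_, _, hkn, rfl⟩)))
    · exact mul_inv_eq_one.mp (by simpa using h _ (Or.inr (Or.inr (Or.inl ⟨n, rfl⟩))))
    · exact mul_inv_eq_one.mp
        (by simpa using h _ (Or.inr (Or.inr (Or.inr (Or.inl ⟨n, rfl⟩)))))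
    · simpa using h _ (Or.inr (Or.inr (Or.inr (Or.inr ⟨n, rfl⟩))))
  · rintro h r (⟨i, j, hij, rfl⟩ | ⟨k, n, hkn, rfl⟩ | ⟨n, rfl⟩ | ⟨n, rfl⟩ | ⟨n, rfl⟩) <;>
      simp only [map_mul, map_inv, map_pow, mul_inv_eq_one, FreeGroup.lift_apply_of,
        Sum.elim_inl, Sum.elim_inr]
    exacts [h.x_mul_x hij, h.x_mul_c hkn, h.c_mul_x_zero n, h.c_eq n, h.c_pow n]

end Relations

section Sequences

variable {G : Type*} [Group G] {a b t : G}

def xSeq (a b : G) : ℕ → G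
  | 0 => a
  | i + 1 => a⁻¹ ^ i * b * a ^ i

def cSeq (a b t : G) : ℕ → G
  | 0 => a * t
  | n + 1 => a⁻¹ ^ n * t * b ^ n

@[simp] theorem xSeq_zero : xSeq a b 0 = a := rfl

@[simp] theorem xSeq_one : xSeq a b 1 = b := by simp [xSeq]

@[simp] theorem xSeq_two : xSeq a b 2 = a⁻¹ * b * a := by simp [xSeq]

@[simp] theorem xSeq_three : xSeq a b 3 = a⁻¹ ^ 2 * b * a ^ 2 := rfl

@[simp] theorem cSeq_zero : cSeq a b t 0 = a * t := rfl

@[simp] theorem cSeq_one : cSeq a b t 1 = t := by simp [cSeq]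

@[simp] theorem cSeq_two : cSeq a b t 2 = a⁻¹ * t * b := by simp [cSeq]

@[simp] theorem cSeq_three : cSeq a b t 3 = a⁻¹ ^ 2 * t * b ^ 2 := rfl

theorem xSeq_add_two (i : ℕ) : xSeq a b (i + 2) = a⁻¹ * xSeq a b (i + 1) * a := by
  simp only [xSeq, pow_succ']; group

theorem xSeq_add (m k : ℕ) : xSeq a b (m + k + 1) = a⁻¹ ^ k * xSeq a b (m + 1) * a ^ k := by
  simp only [xSeq, pow_add]; group

theorem cSeq_add_two (n : ℕ) : cSeq a b t (n + 2) = a⁻¹ * cSeq a b t (n + 1) * b := by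
  simp only [cSeq, pow_succ']; group

theorem map_xSeq {H : Type*} [Group H] (f : G →* H) (i : ℕ) :
    f (xSeq a b i) = xSeq (f a) (f b) i := by
  cases i <;> simp [xSeq]

theorem map_cSeq {H : Type*} [Group H] (f : G →* H) (n : ℕ) :
    f (cSeq a b t n) = cSeq (f a) (f b) (f t) n := by
  cases n <;> simp [cSeq]

theorem inv_mul_mul_eq_of_commute_mul_inv {q : G} (h : Commute (a * b⁻¹) q) :
    b⁻¹ * q * b = a⁻¹ * q * a := by
  calc b⁻¹ * q * b = a⁻¹ * ((a * b⁻¹) * q * (a * b⁻¹)⁻¹) * a := by group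
    _ = a⁻¹ * q * a := by rw [h.eq]; group

theorem inv_xSeq_mul_mul_xSeq (m k : ℕ) :
    (xSeq a b (k + 1))⁻¹ * xSeq a b (m + k + 2) * xSeq a b (k + 1)
      = a⁻¹ ^ k * (b⁻¹ * xSeq a b (m + 2) * b) * a ^ k := by
  rw [show m + k + 2 = (m + 1) + k + 1 by omega, xSeq_add, xSeq]
  group

namespace FinFRelations

variable (h : FinFRelations a b)
include h

theorem inv_b_mul_xSeq_mul_b (m : ℕ) : b⁻¹ * xSeq a b (m + 2) * b = xSeq a b (m + 3) := by
  have base : b⁻¹ * xSeq a b 2 * b = xSeq a b 3 := by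
    rw [inv_mul_mul_eq_of_commute_mul_inv (by simpa using h.commute_two), ← xSeq_add_two]
  induction m using Nat.twoStepInduction with
  | zero => exact base
  | one => rw [inv_mul_mul_eq_of_commute_mul_inv (by simpa using h.commute_three),
      ← xSeq_add_two]
  | more m ih₀ ih₁ =>
    have h₂ : (xSeq a b 2)⁻¹ * xSeq a b (m + 3) * xSeq a b 2 = xSeq a b (m + 4) := by
      have conj := inv_xSeq_mul_mul_xSeq (a := a) (b := b) m 1
      rwa [ih₀, ← xSeq_add] at conj
    have h₃ : (xSeq a b 3)⁻¹ * xSeq a b (m + 4) * xSeq a b 3 = xSeq a b (m + 5) := by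
      have conj := inv_xSeq_mul_mul_xSeq (a := a) (b := b) m 2
      rw [ih₀, ← xSeq_add] at conj
      exact conj
    -- conjugate `x_{m+4} = x₂⁻¹ x_{m+3} x₂` by `b`
    calc b⁻¹ * xSeq a b (m + 2 + 2) * b
        = (b⁻¹ * xSeq a b 2 * b)⁻¹ * (b⁻¹ * xSeq a b (m + 3) * b) * (b⁻¹ * xSeq a b 2 * b) := by
          rw [← h₂]; group
      _ = xSeq a b (m + 2 + 3) := by rw [base, ih₁, h₃]

theorem inv_xSeq_mul_xSeq_mul_xSeq {i j : ℕ} (hij : i < j) :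
    (xSeq a b i)⁻¹ * xSeq a b j * xSeq a b i = xSeq a b (j + 1) := by
  obtain ⟨m, rfl⟩ : ∃ m, j = m + i + 1 := ⟨j - i - 1, by omega⟩
  cases i with
  | zero => rw [xSeq_zero, xSeq_add_two]
  | succ k =>
    rw [show m + (k + 1) + 1 = m + k + 2 by omega, inv_xSeq_mul_mul_xSeq,
      h.inv_b_mul_xSeq_mul_b, ← xSeq_add]
    ring_nf

theorem xSeq_mul_xSeq {i j : ℕ} (hij : i < j) :
    xSeq a b j * xSeq a b i = xSeq a b i * xSeq a b (j + 1) := by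
  rw [← h.inv_xSeq_mul_xSeq_mul_xSeq hij]; group

end FinFRelations

end Sequences

section Propagation

variable {G : Type*} [Group G] {X C : ℕ → G}

theorem x_mul_c_succ_of_x_mul_c (hX : ∀ {i j : ℕ}, i < j → X j * X i = X i * X (j + 1))
    (hC : ∀ n, C n = X n * C (n + 1)) {k n : ℕ} (hkn : k < n)
    (h : X k * C (n + 1) = C n * X (k + 1)) : X k * C (n + 2) = C (n + 1) * X (k + 1) :=
  calc X k * C (n + 2)
      = (X n)⁻¹ * (X n * X k) * (X (n + 1))⁻¹ * C (n + 1) := by rw [hC (n + 1)]; group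
    _ = (X n)⁻¹ * (X k * C (n + 1)) := by rw [hX hkn]; group
    _ = C (n + 1) * X (k + 1) := by rw [h, hC n]; group

theorem c_mul_x_zero_succ (hC : ∀ n, C n = X n * C (n + 1)) {n : ℕ}
    (hXC : X n * C (n + 2) = C (n + 1) * X (n + 1)) (h : C n * X 0 = C (n + 1) ^ 2) :
    C (n + 1) * X 0 = C (n + 2) ^ 2 :=
  calc C (n + 1) * X 0
      = (X n)⁻¹ * (C n * X 0) := by rw [hC n]; group
    _ = ((X n)⁻¹ * (C (n + 1) * X (n + 1))) * ((X (n + 1))⁻¹ * C (n + 1)) := by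
        rw [h, sq]; group
    _ = C (n + 2) ^ 2 := by rw [← hXC, hC (n + 1), sq]; group

theorem c_pow_succ {n : ℕ} (hXC : ∀ {k}, k < n → X k * C (n + 1) = C n * X (k + 1))
    (hCX : C n * X 0 = C (n + 1) ^ 2) (hC : C n = X n * C (n + 1)) :
    C (n + 1) ^ (n + 3) = C n ^ (n + 2) := by
  have key : ∀ j ≤ n, C (n + 1) ^ (j + 2) = C n ^ (j + 1) * X j := by
    intro j hj
    induction j with
    | zero => rw [zero_add, pow_one, hCX]
    | succ j ih =>
      rw [pow_succ, ih (by omega), mul_assoc, hXC (by omega), pow_succ _ (j + 1), mul_assoc]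
  rw [pow_succ, key n le_rfl, hC, pow_succ _ (n + 1)]
  group

end Propagation

namespace FinTRelations

variable {G : Type*} [Group G] {a b t : G} (h : FinTRelations a b t)
include h

theorem cSeq_eq_xSeq_mul_cSeq (n : ℕ) : cSeq a b t n = xSeq a b n * cSeq a b t (n + 1) := by
  cases n with
  | zero => simp
  | succ n =>
    calc cSeq a b t (n + 1) = a⁻¹ ^ n * (b * (a⁻¹ * t * b)) * b ^ n := by rw [h.mul_t2]; rfl
      _ = xSeq a b (n + 1) * cSeq a b t (n + 2) := by simp only [xSeq, cSeq, pow_succ']; group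

theorem b_mul_cSeq {n : ℕ} (hn : 1 < n) : b * cSeq a b t (n + 1) = cSeq a b t n * xSeq a b 2 := by
  induction n, hn using Nat.le_induction with
  | base => simpa using h.mul_t3
  | succ n hn ih =>
    simpa using x_mul_c_succ_of_x_mul_c h.xSeq_mul_xSeq h.cSeq_eq_xSeq_mul_cSeq hn
      (by simpa using ih)

theorem xSeq_mul_cSeq : ∀ {k n : ℕ}, k < n →
    xSeq a b k * cSeq a b t (n + 1) = cSeq a b t n * xSeq a b (k + 1)
  | 0, n + 1, _ => by rw [cSeq_add_two, xSeq_zero, xSeq_one]; group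
  | 1, n, hn => by simpa using h.b_mul_cSeq hn
  | k + 2, n + 2, hkn =>
    calc xSeq a b (k + 2) * cSeq a b t (n + 3)
        = a⁻¹ * (xSeq a b (k + 1) * cSeq a b t (n + 2)) * b := by
          rw [xSeq_add_two, cSeq_add_two]; group
      _ = (a⁻¹ * cSeq a b t (n + 1) * b) * (b⁻¹ * xSeq a b (k + 2) * b) := by
          rw [xSeq_mul_cSeq (by omega)]; group
      _ = cSeq a b t (n + 2) * xSeq a b (k + 3) := by
          rw [← cSeq_add_two, h.inv_b_mul_xSeq_mul_b]

theorem cSeq_mul_a (n : ℕ) : cSeq a b t n * a = cSeq a b t (n + 1) ^ 2 := by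
  induction n with
  | zero =>
    calc cSeq a b t 0 * a = a * (a⁻¹ * t * b) ^ 2 := by rw [cSeq_zero, ← h.t_mul]; group
      _ = t * (b * (a⁻¹ * t * b)) := by rw [sq]; group
      _ = cSeq a b t 1 ^ 2 := by rw [h.mul_t2, cSeq_one, sq]
  | succ n ih =>
    exact c_mul_x_zero_succ h.cSeq_eq_xSeq_mul_cSeq (h.xSeq_mul_cSeq (by omega)) ih

theorem cSeq_pow (n : ℕ) : cSeq a b t n ^ (n + 2) = 1 := by
  induction n with
  | zero =>
    calc cSeq a b t 0 ^ 2 = cSeq a b t 0 * a * t := by rw [sq, cSeq_zero]; group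
      _ = t ^ 3 := by rw [h.cSeq_mul_a, zero_add, cSeq_one]; group
      _ = 1 := h.pow_three
  | succ n ih =>
    rw [c_pow_succ h.xSeq_mul_cSeq (h.cSeq_mul_a n) (h.cSeq_eq_xSeq_mul_cSeq n), ih]

theorem tRelations : TRelations (xSeq a b) (cSeq a b t) :=
  ⟨h.xSeq_mul_xSeq, h.xSeq_mul_cSeq, h.cSeq_mul_a, h.cSeq_eq_xSeq_mul_cSeq, h.cSeq_pow⟩

end FinTRelations

namespace TRelations

variable {G : Type*} [Group G] {X C : ℕ → G} (h : TRelations X C)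
include h

theorem xSeq_eq : ∀ i, xSeq (X 0) (X 1) i = X i
  | 0 => rfl
  | 1 => xSeq_one
  | i + 2 => by rw [xSeq_add_two, xSeq_eq (i + 1), mul_assoc, h.x_mul_x i.succ_pos]; group

theorem cSeq_eq : ∀ n, cSeq (X 0) (X 1) (C 1) n = C n
  | 0 => (h.c_eq 0).symm
  | 1 => cSeq_one
  | n + 2 => by rw [cSeq_add_two, cSeq_eq (n + 1), mul_assoc, ← h.x_mul_c n.succ_pos]; group

theorem commute_x_zero_mul_inv_x_one {j : ℕ} (hj : 2 ≤ j) : Commute (X 0 * (X 1)⁻¹) (X j) :=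
  calc X 0 * (X 1)⁻¹ * X j
      = X 0 * (X 1)⁻¹ * (X j * X 1) * (X 1)⁻¹ := by group
    _ = X 0 * X (j + 1) * (X 1)⁻¹ := by rw [h.x_mul_x (by omega : 1 < j)]; group
    _ = X j * (X 0 * (X 1)⁻¹) := by rw [← h.x_mul_x (by omega : 0 < j)]; group

theorem finTRelations : FinTRelations (X 0) (X 1) (C 1) := by
  have commute_two := h.commute_x_zero_mul_inv_x_one le_rfl
  have commute_three := h.commute_x_zero_mul_inv_x_one (j := 3) (by omega)
  have mul_t3 := h.x_mul_c (by omega : 1 < 2)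
  have t_mul := h.c_mul_x_zero 1
  have mul_t2 := (h.c_eq 1).symm
  rw [← h.xSeq_eq 2, xSeq_two] at commute_two
  rw [← h.xSeq_eq 3, xSeq_three] at commute_three
  rw [← h.cSeq_eq 3, ← h.cSeq_eq 2, ← h.xSeq_eq 2, cSeq_three, cSeq_two, xSeq_two] at mul_t3
  rw [← h.cSeq_eq 2, cSeq_two] at t_mul mul_t2
  exact ⟨⟨commute_two, commute_three⟩, mul_t3, t_mul, mul_t2, h.c_pow 1⟩

end TRelations

theorem tRelations_x_c : TRelations x c := by
  have hof : Sum.elim x c = PresentedGroup.of := funext (Sum.rec (fun _ => rfl) fun _ => rfl)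
  rw [← forall_mem_TRel_lift_eq_one_iff, hof]
  exact fun _ => PresentedGroup.lift_of_eq_one_of_mem

theorem finTRelations_of :
    FinTRelations (PresentedGroup.of 0 : PresentedGroup TFinRel) (.of 1) (.of 2) :=
  (forall_mem_TFinRel_lift_eq_one_iff _).mp fun _ => PresentedGroup.lift_of_eq_one_of_mem

def finToThompsonT : PresentedGroup TFinRel →* ThompsonT :=
  PresentedGroup.toGroup (f := ![x 0, x 1, c 1])
    ((forall_mem_TFinRel_lift_eq_one_iff _).mpr tRelations_x_c.finTRelations)

def thompsonTToFin : ThompsonT →* PresentedGroup TFinRel :=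
  PresentedGroup.toGroup ((forall_mem_TRel_lift_eq_one_iff _ _).mpr finTRelations_of.tRelations)

@[simp] theorem finToThompsonT_of_zero : finToThompsonT (.of 0) = x 0 := PresentedGroup.toGroup.of _
@[simp] theorem finToThompsonT_of_one : finToThompsonT (.of 1) = x 1 := PresentedGroup.toGroup.of _
@[simp] theorem finToThompsonT_of_two : finToThompsonT (.of 2) = c 1 := PresentedGroup.toGroup.of _

@[simp] theorem thompsonTToFin_x (i : ℕ) : thompsonTToFin (x i) = xSeq (.of 0) (.of 1) i :=
  PresentedGroup.toGroup.of _

@[simp] theorem thompsonTToFin_c (n : ℕ) :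
    thompsonTToFin (c n) = cSeq (.of 0) (.of 1) (.of 2) n :=
  PresentedGroup.toGroup.of _

def finEquivThompsonT : PresentedGroup TFinRel ≃* ThompsonT :=
  MonoidHom.toMulEquiv finToThompsonT thompsonTToFin
    (PresentedGroup.ext fun i => by fin_cases i <;> simp)
    (PresentedGroup.ext fun
      | .inl i => show finToThompsonT (thompsonTToFin (x i)) = x i by
          simp [map_xSeq, tRelations_x_c.xSeq_eq]
      | .inr n => show finToThompsonT (thompsonTToFin (c n)) = c n by
          simp [map_cSeq, tRelations_x_c.cSeq_eq])

/-- Thompson's group `T` is finitely presented: the homomorphism from the finitely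
presented group on generators `a, b, t` with the six relators above to `T`,
determined by `a ↦ x_0`, `b ↦ x_1`, `t ↦ c_1`, is an isomorphism. -/
theorem T_finitely_presented :
    ∃ ψ : PresentedGroup TFinRel →* ThompsonT,
      ψ (PresentedGroup.of 0) = x 0 ∧
      ψ (PresentedGroup.of 1) = x 1 ∧
      ψ (PresentedGroup.of 2) = c 1 ∧
      Function.Bijective ψ :=
  ⟨finEquivThompsonT.toMonoidHom, finToThompsonT_of_zero, finToThompsonT_of_one,
    finToThompsonT_of_two, finEquivThompsonT.bijective⟩
end
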